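/- arXiv:math/0404441 — 10 statements merged into one kernel-verified Lean document; each statement's English description precedes it below -/
import Mathlib

section
/- For all natural numbers m and n, the identity sum_{k=0}^{m} C(m+n-k, n) * C(n, k) * λ^k * e_{m+n-k} describes the product e_m ⋆ e_n in the commutative C-algebra with C-module basis {e_j : j ∈ ℕ} (where C is a commutative ring and λ ∈ C); i.e., this multiplication rule is commutative: for all m, n, sum_{k=0}^{m} C(m+n-k,n) C(n,k) λ^k e_{m+n-k} = sum_{k=0}^{n} C(m+n-k,m) C(m,k) λ^k e_{m+n-k}. -/
lemma key_coeff (m n k : ℕ) :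
    (m + n - k).choose n * n.choose k = (m + n - k).choose m * m.choose k := by
  rcases le_or_gt k n with hkn | hkn
  · rcases le_or_gt k m with hkm | hkm
    · have h1 : n ≤ m + n - k := by omega
      have h2 : m ≤ m + n - k := by omega
      rw [Nat.choose_mul hkn, Nat.choose_mul hkm]
      congr 1
      exact Nat.choose_symm_of_eq_add (by omega)
    · have : (m + n - k).choose n = 0 := Nat.choose_eq_zero_of_lt (by omega)
      rw [this, Nat.choose_eq_zero_of_lt hkm]
      ring
  · rcases le_or_gt k m with hkm | hkm
    · have : (m + n - k).choose m = 0 := Nat.choose_eq_zero_of_lt (by omega)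
      rw [this, Nat.choose_eq_zero_of_lt hkn]
      ring
    · rw [Nat.choose_eq_zero_of_lt hkn, Nat.choose_eq_zero_of_lt hkm]
      ring

/-- Commutativity of the mixable shuffle product rule on the basis
`e_j = Finsupp.single j 1` of the shuffle Baxter algebra `ш_C(C)`. -/
theorem stmt0 (C : Type) [CommRing C] (lam : C) (m n : ℕ) :
    (∑ k ∈ Finset.range (m + 1),
      ((((m + n - k).choose n * n.choose k : ℕ) : C) * lam ^ k) •
        Finsupp.single (m + n - k) (1 : C)) =
    (∑ k ∈ Finset.range (n + 1),
      ((((m + n - k).choose m * m.choose k : ℕ) : C) * lam ^ k) •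
        Finsupp.single (m + n - k) (1 : C)) := by
  have hL : (∑ k ∈ Finset.range (m + 1),
      ((((m + n - k).choose n * n.choose k : ℕ) : C) * lam ^ k) •
        Finsupp.single (m + n - k) (1 : C)) =
      ∑ k ∈ Finset.range (m + n + 1),
      ((((m + n - k).choose n * n.choose k : ℕ) : C) * lam ^ k) •
        Finsupp.single (m + n - k) (1 : C) := by
    refine Finset.sum_subset (by intro x hx; simp only [Finset.mem_range] at hx ⊢; omega) ?_
    intro k hmem hk
    simp only [Finset.mem_range, not_lt] at hk hmem
    have : (m + n - k).choose n = 0 := Nat.choose_eq_zero_of_lt (by omega)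
    simp [this]
  have hR : (∑ k ∈ Finset.range (n + 1),
      ((((m + n - k).choose m * m.choose k : ℕ) : C) * lam ^ k) •
        Finsupp.single (m + n - k) (1 : C)) =
      ∑ k ∈ Finset.range (m + n + 1),
      ((((m + n - k).choose m * m.choose k : ℕ) : C) * lam ^ k) •
        Finsupp.single (m + n - k) (1 : C) := by
    refine Finset.sum_subset (by intro x hx; simp only [Finset.mem_range] at hx ⊢; omega) ?_
    intro k hmem hk
    simp only [Finset.mem_range, not_lt] at hk hmem
    have : (m + n - k).choose m = 0 := Nat.choose_eq_zero_of_lt (by omega)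
    simp [this]
  rw [hL, hR]
  exact Finset.sum_congr rfl fun k _ => by rw [key_coeff]
end

section
/- Let F be a field of characteristic p > 0 and let A be the divided power algebra over F with basis {e_j} and product e_m · e_n = C(m+n,n) e_{m+n}. Then A is not a noetherian ring: the ideals I_k = span{e_n : p^k ∤ n} form a strictly increasing chain of ideals I_1 ⊊ I_2 ⊊ I_3 ⊊ ⋯. -/
/-- If `p ^ j ∣ N` but `p ^ j ∤ n` and `n ≤ N`, then `p ∣ N.choose n`. -/
lemma stmt4_aux_dvd_choose {p j n N : ℕ} (hp : p.Prime) (hN : p ^ j ∣ N)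
    (hn : ¬ p ^ j ∣ n) (hnN : n ≤ N) : p ∣ N.choose n := by
  have hn0 : n ≠ 0 := by rintro rfl; exact hn (dvd_zero _)
  have hN0 : N ≠ 0 := by omega
  obtain ⟨N', rfl⟩ : ∃ N', N = N' + 1 := ⟨N - 1, by omega⟩
  obtain ⟨n', rfl⟩ : ∃ n', n = n' + 1 := ⟨n - 1, by omega⟩
  have hid : (N' + 1) * N'.choose n' = (N' + 1).choose (n' + 1) * (n' + 1) :=
    Nat.add_one_mul_choose_eq N' n'
  have hC0 : (N' + 1).choose (n' + 1) ≠ 0 := (Nat.choose_pos hnN).ne'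
  have hC'0 : N'.choose n' ≠ 0 := (Nat.choose_pos (by omega)).ne'
  have h1 : j ≤ (N' + 1).factorization p :=
    (Nat.Prime.pow_dvd_iff_le_factorization hp hN0).mp hN
  have h2 : ¬ j ≤ (n' + 1).factorization p := fun h =>
    hn ((Nat.Prime.pow_dvd_iff_le_factorization hp hn0).mpr h)
  have hfac := congrArg (fun x : ℕ => x.factorization p) hid
  simp only [Nat.factorization_mul hN0 hC'0, Nat.factorization_mul hC0 hn0,
    Finsupp.add_apply] at hfac
  have : 1 ≤ ((N' + 1).choose (n' + 1)).factorization p := by omega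
  exact pow_one p ▸ (Nat.Prime.pow_dvd_iff_le_factorization hp hC0).mpr this

/-- The divided power algebra over a field of characteristic `p > 0` is not
noetherian: the ideals `I_k` generated by `{e_n : p^k ∤ n}` (for `k ≥ 1`)
form a strictly increasing chain. -/
theorem stmt4 (F : Type) [Field F] (p : ℕ) (hp : p.Prime) [CharP F p]
    (A : Type) [CommRing A] [Algebra F A] (e : Module.Basis ℕ F A)
    (hmul : ∀ m n : ℕ, e m * e n = (((m + n).choose n : ℕ) : F) • e (m + n)) :
    StrictMono (fun k : ℕ => Ideal.span (⇑e '' {n : ℕ | ¬ p ^ (k + 1) ∣ n}))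
      ∧ ¬ IsNoetherianRing A := by
  set S : ℕ → Set ℕ := fun k => {n : ℕ | ¬ p ^ (k + 1) ∣ n} with hS
  -- multiplication by any element preserves the F-span of the generators
  have hclosed : ∀ k (a : A), ∀ x ∈ Submodule.span F (⇑e '' S k),
      a * x ∈ Submodule.span F (⇑e '' S k) := by
    intro k a x hx
    induction hx using Submodule.span_induction with
    | mem x hxm =>
      obtain ⟨n, hn, rfl⟩ := hxm
      have ha : a ∈ Submodule.span F (Set.range ⇑e) := by
        rw [e.span_eq]; trivial
      induction ha using Submodule.span_induction with
      | mem b hbm =>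
        obtain ⟨m, rfl⟩ := hbm
        rw [hmul m n]
        by_cases hc : (((m + n).choose n : ℕ) : F) = 0
        · simp [hc]
        · refine Submodule.smul_mem _ _ (Submodule.subset_span ⟨m + n, ?_, rfl⟩)
          intro hdvd
          exact hc ((CharP.cast_eq_zero_iff F p _).mpr
            (stmt4_aux_dvd_choose hp hdvd hn (Nat.le_add_left n m)))
      | zero => simp
      | add b c _ _ hb hc => rw [add_mul]; exact Submodule.add_mem _ hb hc
      | smul r b _ hb => rw [smul_mul_assoc]; exact Submodule.smul_mem _ r hb
    | zero => simp
    | add x y _ _ hx hy => rw [mul_add]; exact Submodule.add_mem _ hx hy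
    | smul r x _ hx => rw [mul_smul_comm]; exact Submodule.smul_mem _ r hx
  -- the F-span is an ideal
  have hspan_le : ∀ k, ∀ x ∈ Ideal.span (⇑e '' S k), x ∈ Submodule.span F (⇑e '' S k) := by
    intro k
    let J : Ideal A :=
      { carrier := Submodule.span F (⇑e '' S k)
        add_mem' := fun h1 h2 => Submodule.add_mem _ h1 h2
        zero_mem' := Submodule.zero_mem _
        smul_mem' := fun a x hx => by
          simpa [smul_eq_mul] using hclosed k a x hx }
    intro x hx
    have hle : Ideal.span (⇑e '' S k) ≤ J :=
      Ideal.span_le.mpr (fun y hy => show y ∈ J from Submodule.subset_span hy)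
    exact hle hx
  have hmono : ∀ k, S k ⊆ S (k + 1) := by
    intro k n hn hdvd
    exact hn (dvd_trans (pow_dvd_pow p (by omega)) hdvd)
  have hsm : StrictMono (fun k : ℕ => Ideal.span (⇑e '' S k)) := by
    apply strictMono_nat_of_lt_succ
    intro k
    rw [lt_iff_le_and_ne]
    constructor
    · exact Ideal.span_mono (Set.image_mono (hmono k))
    · intro heq
      have hin : e (p ^ (k + 1)) ∈ Ideal.span (⇑e '' S k) := by
        rw [heq]
        exact Ideal.subset_span ⟨p ^ (k + 1), fun h => by
          have := Nat.le_of_dvd (pow_pos hp.pos _) h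
          have := pow_lt_pow_right₀ hp.one_lt (show k + 1 < k + 1 + 1 by omega)
          omega, rfl⟩
      have hin' := hspan_le k _ hin
      have hnot : (p ^ (k + 1) : ℕ) ∉ S k := fun h => h dvd_rfl
      exact e.linearIndependent.notMem_span_image hnot hin'
  refine ⟨hsm, fun hN => ?_⟩
  have : IsNoetherian A A := hN
  obtain ⟨n, hn⟩ := monotone_stabilizes_iff_noetherian.mpr this
    ⟨fun k => Ideal.span (⇑e '' S k), fun a b hab => hsm.monotone hab⟩
  exact (hsm (Nat.lt_succ_self n)).ne (hn (n + 1) (Nat.le_succ n))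
end

section
/- Let C be a noetherian commutative ring and let A be the commutative C-algebra with free C-module basis {e_j : j ∈ ℕ}, product e_m · e_n = C(m+n,n) e_{m+n}, equipped with the C-linear shift operator P(e_j) = e_{j+1}. Then A satisfies the ascending chain condition for P-stable ideals: every ascending chain of ideals I_1 ⊆ I_2 ⊆ ⋯ with P(I_n) ⊆ I_n stabilizes. -/
/-- Over a noetherian commutative ring `C`, the divided power algebra
`A = ⊕_j C e_j` with product `e_m e_n = C(m+n,n) e_{m+n}` and shift operator
`P(e_j) = e_{j+1}` satisfies the ascending chain condition for `P`-stable
ideals: every ascending chain of ideals stable under `P` stabilizes. -/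
theorem stmt5 (C : Type) [CommRing C] [IsNoetherianRing C]
    (A : Type) [CommRing A] [Algebra C A] (e : Module.Basis ℕ C A)
    (hmul : ∀ m n : ℕ, e m * e n = (((m + n).choose n : ℕ) : C) • e (m + n))
    (P : A →ₗ[C] A) (hP : ∀ j : ℕ, P (e j) = e (j + 1)) :
    ∀ I : ℕ → Ideal A, Monotone I → (∀ n : ℕ, ∀ x ∈ I n, P x ∈ I n) →
      ∃ N : ℕ, ∀ n : ℕ, N ≤ n → I n = I N := by
  classical
  intro I hmono hstab
  -- how P acts on coordinates
  have hPs : ∀ (j : ℕ) (x : A), e.repr (P x) (j + 1) = e.repr x j := by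
    intro j
    have h : (e.coord (j + 1)).comp P = e.coord j := by
      apply e.ext
      intro i
      simp [Module.Basis.coord_apply, hP, Finsupp.single_apply]
    intro x
    simpa [Module.Basis.coord_apply] using LinearMap.congr_fun h x
  -- the submodule of elements supported in degrees < d
  set V : ℕ → Submodule C A :=
    fun d => ⨅ (j : ℕ) (_ : d ≤ j), LinearMap.ker (e.coord j) with hVdef
  have hVmem : ∀ d (x : A), x ∈ V d ↔ ∀ j, d ≤ j → e.repr x j = 0 := by
    intro d x
    simp [hVdef, Submodule.mem_iInf, LinearMap.mem_ker, Module.Basis.coord_apply]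
  have hVtot : ∀ x : A, ∃ d, x ∈ V d := by
    intro x
    refine ⟨(e.repr x).support.sup id + 1, (hVmem _ _).2 ?_⟩
    intro j hj
    by_contra h
    have hj' : j ∈ (e.repr x).support := Finsupp.mem_support_iff.2 h
    have := Finset.le_sup (f := id) hj'
    simp only [id_eq] at this
    omega
  have hPV : ∀ d (x : A), x ∈ V d → P x ∈ V (d + 1) := by
    intro d x hx
    rw [hVmem] at hx ⊢
    intro j hj
    rcases j with _ | j'
    · omega
    · rw [hPs]; exact hx j' (by omega)
  -- leading coefficient ideals
  set L : Ideal A → ℕ → Ideal C :=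
    fun J n => Submodule.map (e.coord n) ((J.restrictScalars C) ⊓ V (n + 1)) with hLdef
  have hLmem : ∀ (J : Ideal A) n (c : C),
      c ∈ L J n ↔ ∃ x : A, x ∈ J ∧ x ∈ V (n + 1) ∧ e.repr x n = c := by
    intro J n c
    simp only [hLdef, Submodule.mem_map, Submodule.mem_inf, Submodule.restrictScalars_mem,
      Module.Basis.coord_apply]
    constructor
    · rintro ⟨x, ⟨h1, h2⟩, h3⟩; exact ⟨x, h1, h2, h3⟩
    · rintro ⟨x, h1, h2, h3⟩; exact ⟨x, ⟨h1, h2⟩, h3⟩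
  -- monotone in the degree (uses P-stability)
  have hLn : ∀ (J : Ideal A), (∀ x ∈ J, P x ∈ J) → Monotone (L J) := by
    intro J hJ
    apply monotone_nat_of_le_succ
    intro n c hc
    rw [hLmem] at hc ⊢
    obtain ⟨x, hx1, hx2, hx3⟩ := hc
    exact ⟨P x, hJ x hx1, hPV _ _ hx2, by rw [hPs, hx3]⟩
  -- monotone in the ideal
  have hLI : ∀ (J J' : Ideal A) n, J ≤ J' → L J n ≤ L J' n := by
    intro J J' n h
    exact Submodule.map_mono (inf_le_inf_right _ (fun x hx => h hx))
  -- noetherian stabilization for chains of ideals of C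
  have hNoeth : ∀ f : ℕ →o Ideal C, ∃ n, ∀ m, n ≤ m → f n = f m :=
    monotone_stabilizes_iff_noetherian.mpr inferInstance
  -- diagonal chain
  have hdiagmono : Monotone (fun n => L (I n) n) := by
    intro m n h
    exact le_trans (hLI _ _ _ (hmono h)) (hLn (I n) (hstab n) h)
  obtain ⟨N1, hN1⟩ := hNoeth ⟨fun n => L (I n) n, hdiagmono⟩
  -- chains at each fixed degree
  have hrow : ∀ n : ℕ, ∃ K, ∀ k, K ≤ k → L (I K) n = L (I k) n := by
    intro n
    exact hNoeth ⟨fun k => L (I k) n, fun a b h => hLI _ _ _ (hmono h)⟩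
  choose K hK using hrow
  set N : ℕ := max N1 ((Finset.range N1).sup K) with hNdef
  have hN1N : N1 ≤ N := le_max_left _ _
  -- key: all the L (I k) n for k ≥ N agree with L (I N) n
  have hkey : ∀ n k, N ≤ k → L (I k) n = L (I N) n := by
    intro n k hk
    by_cases hn : n < N1
    · have hKn : K n ≤ N :=
        le_trans (Finset.le_sup (Finset.mem_range.2 hn)) (le_max_right _ _)
      rw [← hK n k (le_trans hKn hk), hK n N hKn]
    · push_neg at hn
      -- for n ≥ N1 and k ≥ N, L (I k) n equals the diagonal value at N1
      have hval : ∀ k, N ≤ k → L (I k) n = L (I N1) N1 := by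
        intro k hk
        apply le_antisymm
        · have h1 : L (I k) n ≤ L (I (max k n)) (max k n) :=
            le_trans (hLI _ _ _ (hmono (le_max_left _ _)))
              (hLn (I (max k n)) (hstab _) (le_max_right _ _))
          have h2 := hN1 (max k n) (le_trans hn (le_max_right _ _))
          exact le_trans h1 (le_of_eq h2.symm)
        · have h1 : L (I N1) N1 ≤ L (I k) N1 := hLI _ _ _ (hmono (le_trans hN1N hk))
          exact le_trans h1 (hLn (I k) (hstab k) hn)
      rw [hval k hk, hval N le_rfl]
  -- conclude
  refine ⟨N, fun k hk => ?_⟩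
  apply le_antisymm _ (hmono hk)
  -- show I k ≤ I N by induction on the support bound
  have hmain : ∀ d (x : A), x ∈ V d → x ∈ I k → x ∈ I N := by
    intro d
    induction d with
    | zero =>
      intro x hx _
      have hx0 : x = 0 := by
        have : e.repr x = 0 := by
          ext j
          exact (hVmem 0 x).1 hx j (Nat.zero_le j)
        simpa using congrArg e.repr.symm this
      rw [hx0]; exact (I N).zero_mem
    | succ d ih =>
      intro x hx hxk
      have hc : e.repr x d ∈ L (I k) d := (hLmem _ _ _).2 ⟨x, hxk, hx, rfl⟩
      rw [hkey d k hk] at hc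
      obtain ⟨y, hy1, hy2, hy3⟩ := (hLmem _ _ _).1 hc
      have hsub : x - y ∈ V d := by
        rw [hVmem]
        intro j hj
        rcases eq_or_lt_of_le hj with h | h
        · simp [map_sub, ← h, hy3]
        · have h1 := (hVmem _ _).1 hx j h
          have h2 := (hVmem _ _).1 hy2 j h
          simp [map_sub, h1, h2]
      have hsubk : x - y ∈ I k := (I k).sub_mem hxk (hmono hk hy1)
      have := ih (x - y) hsub hsubk
      have := (I N).add_mem this hy1
      simpa using this
  intro x hxk
  obtain ⟨d, hd⟩ := hVtot x
  exact hmain d x hd hxk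
end

section
/- Let C be a noetherian commutative ring and A as above (divided power algebra with shift operator P). Then every P-stable ideal I of A is finitely generated as a P-stable ideal: there exist finitely many f_1, …, f_r ∈ I such that I is the smallest ideal containing f_1, …, f_r and closed under P. -/
/-- Over a noetherian commutative ring `C`, every `P`-stable ideal `I` of the
divided power algebra with shift operator `P` is finitely generated as a
`P`-stable (Baxter) ideal: there is a finite subset `s ⊆ I` such that `I` is
the smallest `P`-stable ideal containing `s`. -/
theorem stmt6 (C : Type) [CommRing C] [IsNoetherianRing C]
    (A : Type) [CommRing A] [Algebra C A] (e : Module.Basis ℕ C A)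
    (hmul : ∀ m n : ℕ, e m * e n = (((m + n).choose n : ℕ) : C) • e (m + n))
    (P : A →ₗ[C] A) (hP : ∀ j : ℕ, P (e j) = e (j + 1))
    (I : Ideal A) (hI : ∀ x ∈ I, P x ∈ I) :
    ∃ s : Finset A, (↑s : Set A) ⊆ (I : Set A) ∧
      ∀ J : Ideal A, (∀ x ∈ J, P x ∈ J) → (↑s : Set A) ⊆ (J : Set A) → I ≤ J := by
  classical
  -- The shift formula for coefficients
  have hshift : ∀ x : A, e.repr (P x) = Finsupp.mapDomain Nat.succ (e.repr x) := by
    have key : (e.repr.toLinearMap ∘ₗ P)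
        = (Finsupp.lmapDomain C C Nat.succ) ∘ₗ e.repr.toLinearMap := by
      apply e.ext
      intro j
      simp [hP j, Finsupp.mapDomain_single]
    intro x
    exact LinearMap.congr_fun key x
  have hPk : ∀ (x : A) (k : ℕ), e.repr (P x) (k + 1) = e.repr x k := by
    intro x k
    rw [hshift]
    exact Finsupp.mapDomain_apply Nat.succ_injective _ _
  have hP0 : ∀ x : A, e.repr (P x) 0 = 0 := by
    intro x
    rw [hshift]
    refine Finsupp.mapDomain_notin_range _ _ ?_
    rintro ⟨k, hk⟩
    exact Nat.succ_ne_zero k hk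
  -- the filtration
  set Alow : ℕ → Submodule C A :=
    fun n => Submodule.comap (e.repr : A →ₗ[C] (ℕ →₀ C)) (Finsupp.supported C C (Set.Iic n))
    with hAlow
  have hmem : ∀ (n : ℕ) (x : A), x ∈ Alow n ↔ ∀ k, n < k → e.repr x k = 0 := by
    intro n x
    simp only [hAlow, Submodule.mem_comap, LinearEquiv.coe_coe, Finsupp.mem_supported',
      Set.mem_Iic, not_le]
  have hmemAll : ∀ x : A, x ∈ Alow ((e.repr x).support.sup id) := by
    intro x
    rw [hmem]
    intro k hk
    by_contra h
    have : k ≤ (e.repr x).support.sup id :=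
      Finset.le_sup (f := id) (Finsupp.mem_support_iff.mpr h)
    omega
  have hPA : ∀ (n : ℕ) (x : A), x ∈ Alow n → P x ∈ Alow (n + 1) := by
    intro n x hx
    rw [hmem] at hx ⊢
    intro k hk
    match k, hk with
    | (k + 1), hk => rw [hPk]; exact hx k (by omega)
  -- leading coefficient modules
  set lc : ℕ → (A →ₗ[C] C) := fun n => (Finsupp.lapply n).comp e.repr.toLinearMap with hlc
  have hlcapp : ∀ (n : ℕ) (x : A), lc n x = e.repr x n := fun n x => rfl
  set IN : ℕ → Submodule C A := fun n => (I.restrictScalars C) ⊓ Alow n with hIN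
  set L : ℕ → Submodule C C := fun n => (IN n).map (lc n) with hL
  have hLmono : Monotone L := by
    apply monotone_nat_of_le_succ
    intro n c hc
    obtain ⟨x, hx, rfl⟩ := hc
    refine ⟨P x, ⟨?_, hPA n x hx.2⟩, ?_⟩
    · exact hI x hx.1
    · rw [hlcapp, hlcapp, hPk]
  obtain ⟨N, hN⟩ := (monotone_stabilizes_iff_noetherian.mpr
    (by infer_instance : IsNoetherian C C)) ⟨L, hLmono⟩
  -- IN N is finitely generated over C
  have hANle : Alow N ≤ Submodule.span C (e '' Set.Iic N) := by
    intro x hx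
    rw [hmem] at hx
    rw [← e.linearCombination_repr x, Finsupp.linearCombination_apply, Finsupp.sum]
    refine Submodule.sum_mem _ ?_
    intro j hj
    refine Submodule.smul_mem _ _ (Submodule.subset_span ?_)
    refine ⟨j, ?_, rfl⟩
    simp only [Set.mem_Iic]
    by_contra h
    exact Finsupp.mem_support_iff.mp hj (hx j (by omega))
  have hnoeth : IsNoetherian C (Submodule.span C (e '' Set.Iic N)) := by
    refine isNoetherian_span_of_finite C ?_
    exact Set.Finite.image _ (Set.finite_Iic N)
  have hfg : (IN N).FG := by
    set S := Submodule.span C (e '' Set.Iic N)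
    have hle : IN N ≤ S := le_trans inf_le_right hANle
    have h1 : (Submodule.comap S.subtype (IN N)).FG := IsNoetherian.noetherian _
    have h2 : Submodule.map S.subtype (Submodule.comap S.subtype (IN N)) = IN N := by
      rw [Submodule.map_comap_eq, Submodule.range_subtype]
      exact inf_eq_right.mpr hle
    exact h2 ▸ h1.map S.subtype
  obtain ⟨s, hs⟩ := hfg
  refine ⟨s, ?_, ?_⟩
  · intro x hx
    have : x ∈ IN N := hs ▸ Submodule.subset_span hx
    exact this.1
  · intro J hJP hsJ
    have hINJ : IN N ≤ J.restrictScalars C := by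
      rw [← hs, Submodule.span_le]
      exact hsJ
    -- iterating P
    have hiter : ∀ (m : ℕ) (y : A), y ∈ I → y ∈ J → y ∈ Alow N →
        P^[m] y ∈ I ∧ P^[m] y ∈ J ∧ P^[m] y ∈ Alow (N + m) ∧
          e.repr (P^[m] y) (N + m) = e.repr y N := by
      intro m
      induction m with
      | zero => intro y h1 h2 h3; simpa using ⟨h1, h2, h3⟩
      | succ m ih =>
        intro y h1 h2 h3
        obtain ⟨g1, g2, g3, g4⟩ := ih y h1 h2 h3
        rw [Function.iterate_succ_apply']
        exact ⟨hI _ g1, hJP _ g2, by simpa [← Nat.add_assoc] using hPA _ _ g3,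
          by rw [← Nat.add_assoc, hPk, g4]⟩
    -- main induction
    have key : ∀ n : ℕ, ∀ x : A, x ∈ I → x ∈ Alow n → x ∈ J := by
      intro n
      induction n using Nat.strong_induction_on with
      | _ n IH =>
        intro x hxI hxA
        by_cases hn : n ≤ N
        · refine hINJ (Submodule.mem_inf.mpr ⟨hxI, (hmem N x).mpr fun k hk => ?_⟩)
          exact (hmem n x).mp hxA k (by omega)
        · push_neg at hn
          have hc : e.repr x n ∈ L n := ⟨x, ⟨hxI, hxA⟩, rfl⟩
          have hc' : e.repr x n ∈ L N := by rw [show L N = L n from hN n hn.le]; exact hc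
          obtain ⟨y, hy, hyc⟩ := hc'
          have hyc' : e.repr y N = e.repr x n := hyc
          obtain ⟨g1, g2, g3, g4⟩ := hiter (n - N) y hy.1 (hINJ hy) hy.2
          rw [show N + (n - N) = n by omega] at g3 g4
          set z := P^[n - N] y with hz
          have hw : x - z ∈ Alow (n - 1) := by
            rw [hmem]
            intro k hk
            rw [map_sub, Finsupp.sub_apply]
            rcases eq_or_lt_of_le (show n ≤ k by omega) with h | h
            · rw [← h, g4, hyc', sub_self]
            · rw [(hmem n x).mp hxA k h, (hmem n z).mp g3 k h, sub_self]
          have hwI : x - z ∈ I := I.sub_mem hxI g1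
          have hwJ : x - z ∈ J := IH (n - 1) (by omega) _ hwI hw
          have : x = (x - z) + z := by ring
          rw [this]
          exact J.add_mem hwJ g2
    intro x hx
    exact key _ x hx (hmemAll x)
end

section
/- Let C be a noetherian ring containing ℚ, and let A be the C-algebra with free C-basis {e_j : j ∈ ℕ} and multiplication e_m e_n = Σ_{k=0}^{min(m,n)} C(m+n-k,n) C(n,k) λ^k e_{m+n-k} for a fixed λ ∈ C. Then A is a noetherian ring. -/
set_option maxHeartbeats 1000000 in
/-- Theorem 3.1(1): if `C` is a noetherian ring containing `ℚ`, then the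
shuffle Baxter algebra `ш_C(C)` of any weight `λ` — the `C`-algebra with free
basis `e_j` and product
`e_m e_n = Σ_{k=0}^{min(m,n)} C(m+n-k,n) C(n,k) λ^k e_{m+n-k}` —
is a noetherian ring. -/
theorem stmt7 (C : Type) [CommRing C] [Algebra ℚ C] [IsNoetherianRing C]
    (lam : C) (A : Type) [CommRing A] [Algebra C A] (e : Module.Basis ℕ C A)
    (hmul : ∀ m n : ℕ, e m * e n =
      ∑ k ∈ Finset.range (min m n + 1),
        ((((m + n - k).choose n * n.choose k : ℕ) : C) * lam ^ k) • e (m + n - k)) :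
    IsNoetherianRing A := by
  -- Step 1: e 0 = 1
  have he0 : e 0 = (1 : A) := by
    have h : LinearMap.mulLeft C (e 0) = LinearMap.id := by
      apply e.ext
      intro n
      have := hmul 0 n
      simp at this
      simpa [LinearMap.mulLeft_apply] using this
    have h1 := congrArg (fun f => f (1 : A)) h
    simpa using h1
  -- Step 2: every e j lies in the subalgebra generated by e 1
  have key : ∀ j, e j ∈ Algebra.adjoin C {e 1} := by
    intro j
    induction j with
    | zero => rw [he0]; exact one_mem _
    | succ j ih =>
      rcases Nat.eq_zero_or_pos j with hj | hj
      · subst hj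
        exact Algebra.subset_adjoin rfl
      · -- e 1 * e j = (j+1) • e (j+1) + (j * lam) • e j
        have hm : e 1 * e j = ((j + 1 : ℕ) : C) • e (j + 1) + (((j : ℕ) : C) * lam) • e j := by
          have h := hmul 1 j
          rw [min_eq_left hj] at h
          rw [h]
          rw [Finset.sum_range_succ, Finset.sum_range_succ, Finset.sum_range_zero]
          simp [Nat.choose_succ_self_right, Nat.add_comm 1 j, Nat.add_sub_cancel,
            Nat.choose_one_right, mul_comm]
        have hcoef : (algebraMap ℚ C ((j + 1 : ℚ)⁻¹)) * ((j + 1 : ℕ) : C) = 1 := by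
          have : ((j + 1 : ℕ) : C) = algebraMap ℚ C ((j + 1 : ℚ)) := by
            push_cast
            simp
          rw [this, ← map_mul]
          rw [inv_mul_cancel₀ (by positivity : (j + 1 : ℚ) ≠ 0)]
          simp
        have hej : e (j + 1) =
            (algebraMap ℚ C ((j + 1 : ℚ)⁻¹)) • (e 1 * e j - (((j : ℕ) : C) * lam) • e j) := by
          rw [hm]
          rw [add_sub_cancel_right, smul_smul, hcoef, one_smul]
        have h1 : e 1 ∈ Algebra.adjoin C {e 1} := Algebra.subset_adjoin rfl
        have h2 : e 1 * e j ∈ Algebra.adjoin C {e 1} := mul_mem h1 ih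
        have h3 : (((j : ℕ) : C) * lam) • e j ∈ Algebra.adjoin C {e 1} :=
          Subalgebra.smul_mem _ ih _
        have h4 : e 1 * e j - (((j : ℕ) : C) * lam) • e j ∈ Algebra.adjoin C {e 1} :=
          sub_mem h2 h3
        have h5 : (algebraMap ℚ C ((j + 1 : ℚ)⁻¹)) •
            (e 1 * e j - (((j : ℕ) : C) * lam) • e j) ∈ Algebra.adjoin C {e 1} :=
          Subalgebra.smul_mem _ h4 _
        rw [hej]
        exact h5
  -- Step 3: adjoin = ⊤
  have htop : Algebra.adjoin C {e 1} = ⊤ := by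
    have hspan : Submodule.span C (Set.range e) ≤
        Subalgebra.toSubmodule (Algebra.adjoin C {e 1}) :=
      Submodule.span_le.mpr (by rintro _ ⟨j, rfl⟩; exact key j)
    rw [eq_top_iff]
    intro a _
    exact hspan (by rw [e.span_eq]; trivial)
  haveI : Algebra.FiniteType C A := ⟨⟨{e 1}, by simpa using htop⟩⟩
  exact Algebra.FiniteType.isNoetherianRing C A
end

section
/- Let C be a commutative ring and λ ∈ C a non-zerodivisor. Define Φ from Â = Π_{m∈ℕ} C e_m (complete shuffle Baxter algebra of weight λ) to 𝔄(C) = Π_{n≥1} C (componentwise product) by Φ((b_m)_m) = (Σ_{i=0}^{n-1} C(n-1,i) λ^i b_i)_{n≥1}. Then Φ is an injective C-algebra homomorphism; in particular Φ((b_m)(c_m)) = Φ((b_m)) · Φ((c_m)) componentwise, where the source multiplication is (a·b)_N = Σ_{m,n,k: m+n-k=N, 0≤k≤min(m,n)} C(m+n-k,n)C(n,k)λ^k a_m b_n. -/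
open Finset

private lemma aux_swap {M : Type*} [AddCommMonoid M] (f : ℕ × ℕ → M) (n : ℕ) :
    ∑ p ∈ Finset.HasAntidiagonal.antidiagonal n, f p = ∑ k ∈ Finset.range (n + 1), f (n - k, k) := by
  rw [← Finset.Nat.sum_antidiagonal_swap]
  exact Finset.Nat.sum_antidiagonal_eq_sum_range_succ_mk (fun p => f p.swap) n

private lemma bound_ext {M : Type*} [AddCommMonoid M] {n m : ℕ} (h : m ≤ n) (g : ℕ → M) :
    ∑ k ∈ Finset.range (m + 1), g k = ∑ k ∈ Finset.range (n + 1), if k ≤ m then g k else 0 := by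
  rw [← Finset.sum_filter]
  congr 1
  ext x
  simp only [Finset.mem_filter, Finset.mem_range, Nat.lt_succ_iff]
  omega

private lemma triple_sum {M : Type*} [AddCommMonoid M] (s : Finset ℕ)
    (p : ℕ × ℕ × ℕ → Prop) [DecidablePred p] (f : ℕ × ℕ × ℕ → M) :
    ∑ x ∈ (s ×ˢ s ×ˢ s).filter p, f x
      = ∑ i ∈ s, ∑ k ∈ s, ∑ j ∈ s, if p (i, k, j) then f (i, k, j) else 0 := by
  rw [Finset.sum_filter, Finset.sum_product]
  exact Finset.sum_congr rfl fun i _ => Finset.sum_product _ _ _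

/-- Proposition 2.2: for `λ ∈ C` a non-zerodivisor, the map
`Φ((b_m)_m) = (Σ_{i=0}^{n-1} C(n-1,i) λ^i b_i)_{n ≥ 1}` from the complete
shuffle Baxter algebra `ш̂_C(C)` of weight `λ` (sequences with the mixable
shuffle product) to `𝔄(C) = Π_{n≥1} C` with componentwise operations is an
injective `C`-algebra homomorphism.  (Here the `n`-indexed component of `Φ`,
`n : ℕ`, corresponds to the paper's component `n+1`.) -/
theorem stmt10 (C : Type) [CommRing C] (lam : C)
    (hlam : ∀ c : C, lam * c = 0 → c = 0)
    (A : Type) [CommRing A] [Algebra C A] (E : A ≃ₗ[C] (ℕ → C))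
    (h1 : E 1 = fun n => if n = 0 then 1 else 0)
    (hmul : ∀ a b : A, ∀ N : ℕ, E (a * b) N =
      ∑ p ∈ Finset.HasAntidiagonal.antidiagonal N, ∑ q ∈ Finset.HasAntidiagonal.antidiagonal p.2,
        ((N.choose p.2 * p.2.choose q.2 : ℕ) : C) * lam ^ q.2 *
          E a (p.1 + q.2) * E b p.2) :
    let Φ : A → (ℕ → C) := fun a n =>
      ∑ i ∈ Finset.range (n + 1), ((n.choose i : ℕ) : C) * lam ^ i * E a i
    Function.Injective Φ ∧
      (∀ a b : A, ∀ n : ℕ, Φ (a * b) n = Φ a n * Φ b n) ∧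
      (∀ a b : A, ∀ n : ℕ, Φ (a + b) n = Φ a n + Φ b n) ∧
      (∀ (c : C) (a : A) (n : ℕ), Φ (c • a) n = c * Φ a n) ∧
      (∀ n : ℕ, Φ (1 : A) n = 1) := by
  intro Φ
  have hΦdef : ∀ (a : A) (n : ℕ),
      Φ a n = ∑ i ∈ Finset.range (n + 1), ((n.choose i : ℕ) : C) * lam ^ i * E a i :=
    fun a n => rfl
  -- powers of lam are non-zerodivisors
  have hpow : ∀ (e : ℕ) (c : C), lam ^ e * c = 0 → c = 0 := by
    intro e
    induction e with
    | zero => intro c h; simpa using h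
    | succ m ih =>
      intro c h
      rw [pow_succ', mul_assoc] at h
      exact ih c (hlam _ h)
  -- additivity
  have hadd : ∀ a b : A, ∀ n : ℕ, Φ (a + b) n = Φ a n + Φ b n := by
    intro a b n
    simp only [hΦdef, map_add, Pi.add_apply, mul_add, Finset.sum_add_distrib]
  -- scalar multiplication
  have hsmul : ∀ (c : C) (a : A) (n : ℕ), Φ (c • a) n = c * Φ a n := by
    intro c a n
    simp only [hΦdef, map_smul, Pi.smul_apply, smul_eq_mul, Finset.mul_sum]
    exact Finset.sum_congr rfl fun i _ => by ring
  -- unit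
  have hone : ∀ n : ℕ, Φ (1 : A) n = 1 := by
    intro n
    rw [hΦdef]
    simp only [h1]
    rw [Finset.sum_eq_single 0]
    · simp
    · intro i _ hi; simp [hi]
    · intro h; simp at h
  -- injectivity
  have hinj : Function.Injective Φ := by
    intro a b h
    apply E.injective
    funext n
    induction n using Nat.strong_induction_on with
    | _ n ih =>
      have h' := congrFun h n
      rw [hΦdef, hΦdef, Finset.sum_range_succ, Finset.sum_range_succ] at h'
      have hsum : ∑ i ∈ Finset.range n, ((n.choose i : ℕ) : C) * lam ^ i * E a i
          = ∑ i ∈ Finset.range n, ((n.choose i : ℕ) : C) * lam ^ i * E b i :=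
        Finset.sum_congr rfl fun i hi => by rw [ih i (Finset.mem_range.mp hi)]
      rw [hsum] at h'
      have h2 := add_left_cancel h'
      rw [Nat.choose_self] at h2
      have h3 : lam ^ n * (E a n - E b n) = 0 := by
        rw [mul_sub, sub_eq_zero]
        simpa using h2
      exact sub_eq_zero.mp (hpow n _ h3)
  -- multiplicativity
  have hmulΦ : ∀ a b : A, ∀ n : ℕ, Φ (a * b) n = Φ a n * Φ b n := by
    intro a b n
    set s : Finset ℕ := Finset.range (n + 1) with hs
    set T : ℕ × ℕ × ℕ → C := fun x =>
      ((n.choose x.2.1 * (n - x.2.1).choose (x.1 - x.2.2) * x.2.1.choose x.2.2 : ℕ) : C)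
        * lam ^ (x.1 + x.2.1) * E a x.1 * E b x.2.1 with hT
    set F : ℕ × ℕ × ℕ → C := fun x =>
      ((n.choose x.1 * (x.1.choose x.2.1 * x.2.1.choose x.2.2) : ℕ) : C)
        * lam ^ (x.1 + x.2.2) * E a (x.1 - x.2.1 + x.2.2) * E b x.2.1 with hF
    set A1 : Finset (ℕ × ℕ × ℕ) :=
      (s ×ˢ s ×ˢ s).filter (fun x => x.2.1 ≤ x.1 ∧ x.2.2 ≤ x.2.1) with hA1
    set A2 : Finset (ℕ × ℕ × ℕ) :=
      (s ×ˢ s ×ˢ s).filter (fun x =>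
        x.2.2 ≤ x.1 ∧ x.2.2 ≤ x.2.1 ∧ x.1 + x.2.1 ≤ n + x.2.2) with hA2
    -- LHS chain
    have lhs1 : Φ (a * b) n = ∑ i ∈ s, ∑ k ∈ s, ∑ j ∈ s,
        if (k ≤ i ∧ j ≤ k) then F (i, k, j) else 0 := by
      rw [hΦdef]
      refine Finset.sum_congr rfl fun i hi => ?_
      have hi' : i ≤ n := Nat.lt_succ_iff.mp (Finset.mem_range.mp hi)
      rw [hmul a b i, aux_swap, Finset.mul_sum, bound_ext hi']
      refine Finset.sum_congr rfl fun k hk => ?_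
      have hk' : k ≤ n := Nat.lt_succ_iff.mp (Finset.mem_range.mp hk)
      by_cases hki : k ≤ i
      · rw [if_pos hki]
        simp only [hki, true_and]
        rw [aux_swap (fun q => ((i.choose k * k.choose q.2 : ℕ) : C) * lam ^ q.2
            * E a (i - k + q.2) * E b k), Finset.mul_sum, bound_ext hk']
        refine Finset.sum_congr rfl fun j hj => ?_
        by_cases hjk : j ≤ k
        · rw [if_pos hjk, if_pos hjk, hF]
          dsimp only
          push_cast
          ring
        · rw [if_neg hjk, if_neg hjk]
      · rw [if_neg hki]
        symm
        refine Finset.sum_eq_zero fun j _ => ?_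
        rw [if_neg (by tauto)]
    have lhs2 : (∑ i ∈ s, ∑ k ∈ s, ∑ j ∈ s,
        if (k ≤ i ∧ j ≤ k) then F (i, k, j) else 0) = ∑ x ∈ A1, F x := by
      rw [hA1, triple_sum s (fun x => x.2.1 ≤ x.1 ∧ x.2.2 ≤ x.2.1) F]
    have lhs3 : ∑ x ∈ A1, F x = ∑ x ∈ A2, T x := by
      refine Finset.sum_nbij' (fun x => (x.1 - x.2.1 + x.2.2, x.2.1, x.2.2))
        (fun x => (x.1 + x.2.1 - x.2.2, x.2.1, x.2.2)) ?_ ?_ ?_ ?_ ?_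
      · rintro ⟨i, k, j⟩ hx
        simp only [hA1, hA2, Finset.mem_filter, Finset.mem_product, Finset.mem_range,
          Nat.lt_succ_iff, hs] at hx ⊢
        omega
      · rintro ⟨m, k, j⟩ hx
        simp only [hA2, hA1, Finset.mem_filter, Finset.mem_product, Finset.mem_range,
          Nat.lt_succ_iff, hs] at hx ⊢
        omega
      · rintro ⟨i, k, j⟩ hx
        simp only [hA1, Finset.mem_filter, Finset.mem_product, Finset.mem_range,
          Nat.lt_succ_iff, hs] at hx
        simp only [Prod.mk.injEq, and_true]
        omega
      · rintro ⟨m, k, j⟩ hx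
        simp only [hA2, Finset.mem_filter, Finset.mem_product, Finset.mem_range,
          Nat.lt_succ_iff, hs] at hx
        simp only [Prod.mk.injEq, and_true]
        omega
      · rintro ⟨i, k, j⟩ hx
        simp only [hA1, Finset.mem_filter, Finset.mem_product, Finset.mem_range,
          Nat.lt_succ_iff, hs] at hx
        obtain ⟨⟨hin, hkn, hjn⟩, hki, hjk⟩ := hx
        rw [hF, hT]
        dsimp only
        have e1 : i - k + j - j = i - k := by omega
        have e2 : i - k + j + k = i + j := by omega
        have e3 : n.choose i * (i.choose k * k.choose j)
            = n.choose k * (n - k).choose (i - k) * k.choose j := by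
          rw [← mul_assoc, Nat.choose_mul hki]
        rw [e1, e2, e3]
    -- RHS chain
    have rhs1 : Φ a n * Φ b n = ∑ m ∈ s, ∑ k ∈ s, ∑ j ∈ s,
        if j ≤ m then T (m, k, j) else 0 := by
      rw [hΦdef, hΦdef, Finset.sum_mul_sum]
      refine Finset.sum_congr rfl fun m hm => Finset.sum_congr rfl fun k hk => ?_
      have hm' : m ≤ n := Nat.lt_succ_iff.mp (Finset.mem_range.mp hm)
      have hk' : k ≤ n := Nat.lt_succ_iff.mp (Finset.mem_range.mp hk)
      rw [← bound_ext hm' (fun j => T (m, k, j))]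
      have hv : (n.choose m : C)
          = ∑ j ∈ Finset.range (m + 1), ((k.choose j * (n - k).choose (m - j) : ℕ) : C) := by
        have h0 := Nat.add_choose_eq k (n - k) m
        rw [Nat.add_sub_cancel' hk'] at h0
        rw [Finset.Nat.sum_antidiagonal_eq_sum_range_succ_mk] at h0
        push_cast [h0]
        rfl
      rw [hv, Finset.sum_mul, Finset.sum_mul, Finset.sum_mul]
      refine Finset.sum_congr rfl fun j hj => ?_
      rw [hT]
      dsimp only
      push_cast
      ring
    have rhs2 : (∑ m ∈ s, ∑ k ∈ s, ∑ j ∈ s, if j ≤ m then T (m, k, j) else 0)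
        = ∑ x ∈ (s ×ˢ s ×ˢ s).filter (fun x => x.2.2 ≤ x.1), T x := by
      rw [triple_sum s (fun x => x.2.2 ≤ x.1) T]
    have rhs3 : (∑ x ∈ (s ×ˢ s ×ˢ s).filter (fun x => x.2.2 ≤ x.1), T x)
        = ∑ x ∈ A2, T x := by
      rw [hA2, ← Finset.filter_filter]
      symm
      apply Finset.sum_filter_of_ne
      rintro ⟨m, k, j⟩ hx hTx
      simp only [Finset.mem_filter, Finset.mem_product, Finset.mem_range,
        Nat.lt_succ_iff, hs] at hx
      obtain ⟨⟨hmn, hkn, hjn⟩, hjm⟩ := hx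
      constructor
      · show j ≤ k
        by_contra hc
        apply hTx
        rw [hT]
        dsimp only
        rw [Nat.choose_eq_zero_of_lt (by omega : k < j)]
        push_cast
        ring
      · show m + k ≤ n + j
        by_contra hc
        apply hTx
        rw [hT]
        dsimp only
        rw [Nat.choose_eq_zero_of_lt (by omega : n - k < m - j)]
        push_cast
        ring
    rw [lhs1, lhs2, lhs3, rhs1, rhs2, rhs3]
  exact ⟨hinj, hmulΦ, hadd, hsmul, hone⟩
end

section
/- Fix k ≥ 1 and let (b_m)_{m≥0} in ℚ(x) satisfy Σ_{i=0}^{k} C(k,i) x^i b_{m-k+i} = 0 for all m ≥ k, with b_0 = 1 and b_i = 0 for 1 ≤ i ≤ k−1. Then for every n ≥ k+1, Σ_{i=0}^{n-1} C(n-1,i) x^i b_i = 0, while for 1 ≤ n ≤ k, Σ_{i=0}^{n-1} C(n-1,i) x^i b_i = 1. -/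
private noncomputable def Lop (c : ℕ → RatFunc ℚ) : ℕ → RatFunc ℚ :=
  fun j => c j + RatFunc.X * c (j + 1)

private lemma Lop_iter (m : ℕ) :
    ∀ (c : ℕ → RatFunc ℚ) (j : ℕ), (Lop^[m] c) j
      = ∑ i ∈ Finset.range (m + 1),
          ((m.choose i : ℕ) : RatFunc ℚ) * (RatFunc.X : RatFunc ℚ) ^ i * c (j + i) := by
  induction m with
  | zero => intro c j; simp
  | succ m ih =>
    intro c j
    rw [Function.iterate_succ_apply']
    show (Lop^[m] c) j + RatFunc.X * (Lop^[m] c) (j + 1) = _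
    rw [ih, ih, Finset.mul_sum]
    rw [Finset.sum_range_succ' (fun i =>
      (((m+1).choose i : ℕ) : RatFunc ℚ) * (RatFunc.X : RatFunc ℚ) ^ i * c (j + i))]
    have h1 : ∀ i, (((m+1).choose (i+1) : ℕ) : RatFunc ℚ) * (RatFunc.X : RatFunc ℚ) ^ (i+1) * c (j + (i+1))
        = ((m.choose i : ℕ) : RatFunc ℚ) * (RatFunc.X : RatFunc ℚ) ^ (i+1) * c (j + (i+1))
          + ((m.choose (i+1) : ℕ) : RatFunc ℚ) * (RatFunc.X : RatFunc ℚ) ^ (i+1) * c (j + (i+1)) := by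
      intro i
      rw [Nat.choose_succ_succ, Nat.cast_add]
      ring
    simp only [h1, Finset.sum_add_distrib]
    have h2 : ∑ i ∈ Finset.range (m+1),
        RatFunc.X * (((m.choose i : ℕ) : RatFunc ℚ) * (RatFunc.X : RatFunc ℚ) ^ i * c (j + 1 + i))
        = ∑ i ∈ Finset.range (m+1),
          ((m.choose i : ℕ) : RatFunc ℚ) * (RatFunc.X : RatFunc ℚ) ^ (i+1) * c (j + (i+1)) := by
      apply Finset.sum_congr rfl
      intro i _
      have : j + 1 + i = j + (i + 1) := by ring
      rw [this]; ring
    rw [h2]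
    rw [Finset.sum_range_succ' (fun i =>
      ((m.choose i : ℕ) : RatFunc ℚ) * (RatFunc.X : RatFunc ℚ) ^ i * c (j + i))]
    rw [Finset.sum_range_succ (fun i =>
      ((m.choose (i+1) : ℕ) : RatFunc ℚ) * (RatFunc.X : RatFunc ℚ) ^ (i+1) * c (j + (i+1)))]
    simp [Nat.choose_succ_self]
    ring

/-- Equation (eq:xzero) in the proof of Theorem 3.1(3): if `(b_m)` in `ℚ(x)`
satisfies `Σ_{i=0}^{k} C(k,i) x^i b_{m-k+i} = 0` for all `m ≥ k`, with
`b_0 = 1` and `b_i = 0` for `1 ≤ i ≤ k-1`, then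
`Σ_{i=0}^{n-1} C(n-1,i) x^i b_i = 0` for `n ≥ k+1`, while for `1 ≤ n ≤ k`
this sum equals `1`. -/
theorem stmt12 (k : ℕ) (hk : 1 ≤ k) (b : ℕ → RatFunc ℚ)
    (h0 : b 0 = 1)
    (hinit : ∀ i : ℕ, 1 ≤ i → i < k → b i = 0)
    (hrec : ∀ m : ℕ, k ≤ m →
      ∑ i ∈ Finset.range (k + 1),
        ((k.choose i : ℕ) : RatFunc ℚ) * (RatFunc.X : RatFunc ℚ) ^ i * b (m - k + i) = 0) :
    (∀ n : ℕ, k + 1 ≤ n →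
      ∑ i ∈ Finset.range n,
        (((n - 1).choose i : ℕ) : RatFunc ℚ) * (RatFunc.X : RatFunc ℚ) ^ i * b i = 0) ∧
    (∀ n : ℕ, 1 ≤ n → n ≤ k →
      ∑ i ∈ Finset.range n,
        (((n - 1).choose i : ℕ) : RatFunc ℚ) * (RatFunc.X : RatFunc ℚ) ^ i * b i = 1) := by
  have hLk : Lop^[k] b = 0 := by
    funext j
    rw [Lop_iter]
    have := hrec (j + k) (Nat.le_add_left k j)
    simpa [Nat.add_sub_cancel] using this
  have hLzero : ∀ m : ℕ, Lop^[m] (0 : ℕ → RatFunc ℚ) = 0 := by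
    intro m
    induction m with
    | zero => rfl
    | succ m ih =>
      rw [Function.iterate_succ_apply', ih]
      funext j; simp [Lop]
  constructor
  · intro n hn
    have h1 : 1 ≤ n := le_trans (Nat.le_add_left 1 k) hn
    have hsplit : n - 1 = (n - 1 - k) + k := by omega
    have hz : Lop^[n-1] b = 0 := by
      rw [hsplit, Function.iterate_add_apply, hLk, hLzero]
    have h := Lop_iter (n-1) b 0
    rw [hz] at h
    simp only [Pi.zero_apply, Nat.zero_add] at h
    have hrange : n - 1 + 1 = n := by omega
    rw [hrange] at h
    exact h.symm
  · intro n h1 h2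
    rw [Finset.sum_eq_single 0]
    · simp [h0]
    · intro i hi hi0
      rw [hinit i (Nat.one_le_iff_ne_zero.mpr hi0) (lt_of_lt_of_le (Finset.mem_range.mp hi) h2)]
      ring
    · intro h; exact absurd (Finset.mem_range.mpr h1) h
end

section
/- Let C be a ring of characteristic zero and λ ∈ C. In the free Baxter algebra ш_C({x}) of weight λ on one generator, the chain of ideals Σ_n generated by {1 ⊗ x^i : 1 ≤ i ≤ n} is strictly increasing: for every n ≥ 1, 1 ⊗ x^{n+1} ∉ Σ_n. Consequently ш_C({x}) is not a noetherian ring. -/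
open Finsupp

namespace QSh
variable {C : Type} [CommRing C] (lam : C)

abbrev W : Type := List ℕ

noncomputable def pre (a : ℕ) : (W →₀ C) →ₗ[C] (W →₀ C) := Finsupp.lmapDomain C C (a :: ·)

@[simp] lemma pre_single (a : ℕ) (u : W) (c : C) :
    pre (a := a) (Finsupp.single u c) = Finsupp.single (a :: u) c := by
  simp [pre, Finsupp.lmapDomain_apply, Finsupp.mapDomain_single]

noncomputable def qs : W → W → (W →₀ C)
  | [], v => Finsupp.single v 1
  | a :: u, [] => Finsupp.single (a :: u) 1
  | a :: u, b :: v =>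
      pre a (qs u (b :: v)) + pre b (qs (a :: u) v) + lam • pre (a + b) (qs u v)
  termination_by u v => u.length + v.length

@[simp] lemma qs_nil_left (v : W) : qs lam [] v = Finsupp.single v 1 := by
  rw [qs]

@[simp] lemma qs_nil_right (u : W) : qs lam u [] = Finsupp.single u 1 := by
  cases u with
  | nil => rw [qs]
  | cons a u => rw [qs]

lemma qs_cons_cons (a b : ℕ) (u v : W) :
    qs lam (a :: u) (b :: v) =
      pre a (qs lam u (b :: v)) + pre b (qs lam (a :: u) v) + lam • pre (a + b) (qs lam u v) := by
  rw [qs]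

lemma qs_comm_aux : ∀ (N : ℕ) (u v : W), u.length + v.length ≤ N → qs lam u v = qs lam v u := by
  intro N
  induction N with
  | zero =>
    intro u v h
    obtain rfl : u = [] := List.length_eq_zero_iff.mp (by omega)
    obtain rfl : v = [] := List.length_eq_zero_iff.mp (by omega)
    rfl
  | succ N ih =>
    intro u v h
    cases u with
    | nil => simp
    | cons a u =>
      cases v with
      | nil => simp
      | cons b v =>
        rw [qs_cons_cons, qs_cons_cons]
        rw [ih u (b :: v) (by simp at h ⊢; omega),
            ih (a :: u) v (by simp at h ⊢; omega),
            ih u v (by simp at h ⊢; omega)]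
        rw [Nat.add_comm a b]
        abel

lemma qs_comm (u v : W) : qs lam u v = qs lam v u :=
  qs_comm_aux lam (u.length + v.length) u v le_rfl

end QSh

noncomputable section
namespace QSh
variable {C : Type} [CommRing C] (lam : C)

/-- word-level multiplication, bilinear extension of `qs`. -/
noncomputable def mw : (W →₀ C) →ₗ[C] (W →₀ C) →ₗ[C] (W →₀ C) :=
  Finsupp.lift _ C W fun u => Finsupp.lift _ C W fun v => qs lam u v

@[simp] lemma lift_single {M : Type} [AddCommMonoid M] [Module C M] (f : W → M) (u : W) (c : C) :
    Finsupp.lift M C W f (Finsupp.single u c) = c • f u := by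
  simp [Finsupp.lift_apply, Finsupp.sum_single_index]

@[simp] lemma mw_single_single (u v : W) (c d : C) :
    mw lam (Finsupp.single u c) (Finsupp.single v d) = (c * d) • qs lam u v := by
  simp [mw, mul_smul]

lemma mw_delta (u v : W) : mw lam (Finsupp.single u 1) (Finsupp.single v 1) = qs lam u v := by
  simp

@[simp] lemma mw_one_left (f : W →₀ C) : mw lam (Finsupp.single [] 1) f = f := by
  induction f using Finsupp.induction_linear with
  | zero => simp
  | add f g hf hg => simp [hf, hg]
  | single v d => simp

@[simp] lemma mw_one_right (f : W →₀ C) : mw lam f (Finsupp.single [] 1) = f := by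
  induction f using Finsupp.induction_linear with
  | zero => simp
  | add f g hf hg => simp [hf, hg]
  | single v d => simp

lemma mw_comm (f g : W →₀ C) : mw lam f g = mw lam g f := by
  induction f using Finsupp.induction_linear with
  | zero => simp
  | add f f' hf hf' => simp [hf, hf']
  | single u c =>
    induction g using Finsupp.induction_linear with
    | zero => simp
    | add g g' hg hg' => simp [hg, hg']
    | single v d => simp [qs_comm lam u v, mul_comm]

/-- the head rule, lifted to finsupps -/
lemma mw_pre_pre (a b : ℕ) (f g : W →₀ C) :
    mw lam (pre a f) (pre b g) =
      pre a (mw lam f (pre b g)) + pre b (mw lam (pre a f) g)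
        + lam • pre (a + b) (mw lam f g) := by
  induction f using Finsupp.induction_linear with
  | zero => simp
  | add f f' hf hf' =>
    simp only [map_add, LinearMap.add_apply, hf, hf', smul_add]
    abel
  | single u c =>
    induction g using Finsupp.induction_linear with
    | zero => simp
    | add g g' hg hg' =>
      simp only [map_add, LinearMap.add_apply, map_add, hg, hg', smul_add]
      abel
    | single v d =>
      rw [pre_single, pre_single, mw_single_single, qs_cons_cons,
        mw_single_single, mw_single_single, mw_single_single,
        map_smul, map_smul, map_smul, smul_add, smul_add, smul_comm (c * d) lam]

end QSh
end

noncomputable section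
namespace QSh
variable {C : Type} [CommRing C] (lam : C)

lemma mw_assoc_delta : ∀ (N : ℕ) (u v w : W), u.length + v.length + w.length ≤ N →
    mw lam (qs lam u v) (Finsupp.single w 1) = mw lam (Finsupp.single u 1) (qs lam v w) := by
  intro N
  induction N with
  | zero =>
    intro u v w h
    obtain rfl : u = [] := List.length_eq_zero_iff.mp (by omega)
    obtain rfl : v = [] := List.length_eq_zero_iff.mp (by omega)
    obtain rfl : w = [] := List.length_eq_zero_iff.mp (by omega)
    simp
  | succ N ih =>
    intro u v w h
    match u, v, w with
    | [], v, w => simp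
    | u, [], w => simp
    | u, v, [] => simp
    | a :: u', b :: v', c :: w' =>
      simp only [List.length_cons] at h
      have IHa := ih u' (b::v') (c::w') (by simp only [List.length_cons]; omega)
      have IHb := ih (a::u') v' (c::w') (by simp only [List.length_cons]; omega)
      have IHc := ih u' v' (c::w') (by simp only [List.length_cons]; omega)
      have IHm := ih (a::u') (b::v') w' (by simp only [List.length_cons]; omega)
      have IHac := ih u' (b::v') w' (by simp only [List.length_cons]; omega)
      have IHbc := ih (a::u') v' w' (by simp only [List.length_cons]; omega)
      have IHabc := ih u' v' w' (by omega)
      -- collected middle identity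
      have hmid : mw lam (pre a (qs lam u' (b::v'))) (Finsupp.single w' 1)
          + mw lam (pre b (qs lam (a::u') v')) (Finsupp.single w' 1)
          + lam • mw lam (pre (a+b) (qs lam u' v')) (Finsupp.single w' 1)
          = mw lam (Finsupp.single (a::u') 1) (qs lam (b::v') w') := by
        rw [← IHm, qs_cons_cons lam a b u' v']
        simp only [map_add, LinearMap.add_apply, map_smul, LinearMap.smul_apply]
      -- split first-of-RHS identity
      have hfirst : mw lam (Finsupp.single u' 1) (qs lam (b::v') (c::w'))
          = mw lam (Finsupp.single u' 1) (pre b (qs lam v' (c::w')))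
          + mw lam (Finsupp.single u' 1) (pre c (qs lam (b::v') w'))
          + lam • mw lam (Finsupp.single u' 1) (pre (b+c) (qs lam v' w')) := by
        rw [qs_cons_cons lam b c v' w']
        simp only [map_add, map_smul]
      -- expand LHS
      conv_lhs => rw [qs_cons_cons lam a b u' v',
        show (Finsupp.single (c::w') (1:C)) = pre c (Finsupp.single w' 1) from
          (pre_single _ _ _).symm]
      simp only [map_add, LinearMap.add_apply, map_smul, LinearMap.smul_apply]
      rw [mw_pre_pre, mw_pre_pre, mw_pre_pre]
      rw [show pre c (Finsupp.single w' (1:C)) = Finsupp.single (c::w') 1 from pre_single _ _ _]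
      rw [IHa, IHb, IHc]
      rw [IHac, IHbc, IHabc]
      rw [hfirst]
      -- expand RHS
      conv_rhs => rw [qs_cons_cons lam b c v' w',
        show (Finsupp.single (a::u') (1:C)) = pre a (Finsupp.single u' 1) from
          (pre_single _ _ _).symm]
      conv_rhs => simp only [map_add, map_smul]
      conv_rhs => rw [mw_pre_pre, mw_pre_pre, mw_pre_pre]
      rw [show pre a (Finsupp.single u' (1:C)) = Finsupp.single (a::u') 1 from pre_single _ _ _]
      rw [← hmid]
      simp only [map_add, map_smul, Nat.add_assoc]
      module
end QSh
end

noncomputable section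
namespace QSh
variable {C : Type} [CommRing C] (lam : C)

lemma mw_assoc (f g h : W →₀ C) :
    mw lam (mw lam f g) h = mw lam f (mw lam g h) := by
  induction f using Finsupp.induction_linear with
  | zero => simp
  | add f f' hf hf' => simp only [map_add, LinearMap.add_apply, hf, hf']
  | single u c =>
    induction g using Finsupp.induction_linear with
    | zero => simp
    | add g g' hg hg' => simp only [map_add, LinearMap.add_apply, hg, hg']
    | single v d =>
      induction h using Finsupp.induction_linear with
      | zero => simp
      | add h h' hh hh' => simp only [map_add, hh, hh']
      | single w e =>
        have key := mw_assoc_delta lam (u.length + v.length + w.length) u v w le_rfl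
        rw [show (Finsupp.single w e : W →₀ C) = e • Finsupp.single w 1 by
              simp [Finsupp.smul_single],
            show (Finsupp.single u c : W →₀ C) = c • Finsupp.single u 1 by
              simp [Finsupp.smul_single]]
        simp only [map_smul, LinearMap.smul_apply, mw_single_single, smul_smul, one_mul,
          mul_one]
        rw [key]
        congr 1
        ring

-- Pair-level algebra
abbrev P : Type := ℕ × W

abbrev AA (C : Type) [CommRing C] : Type := P →₀ C

/-- embedding of the word part at a given x-degree -/
noncomputable def emb (d : ℕ) : (W →₀ C) →ₗ[C] AA C := Finsupp.lmapDomain C C (fun w => (d, w))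

@[simp] lemma emb_single (d : ℕ) (u : W) (c : C) :
    emb (d := d) (Finsupp.single u c) = Finsupp.single (d, u) c := by
  simp [emb, Finsupp.lmapDomain_apply, Finsupp.mapDomain_single]

noncomputable def mulA : AA C →ₗ[C] AA C →ₗ[C] AA C :=
  Finsupp.lift _ C P fun p => Finsupp.lift _ C P fun q => emb (p.1 + q.1) (qs lam p.2 q.2)

@[simp] lemma mulA_single_single (p q : P) (c d : C) :
    mulA lam (Finsupp.single p c) (Finsupp.single q d)
      = (c * d) • emb (p.1 + q.1) (qs lam p.2 q.2) := by
  simp [mulA, mul_smul]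

lemma mulA_emb_emb (d e : ℕ) (f g : W →₀ C) :
    mulA lam (emb d f) (emb e g) = emb (d + e) (mw lam f g) := by
  induction f using Finsupp.induction_linear with
  | zero => simp
  | add f f' hf hf' => simp only [map_add, LinearMap.add_apply, hf, hf']
  | single u c =>
    induction g using Finsupp.induction_linear with
    | zero => simp
    | add g g' hg hg' => simp only [map_add, hg, hg']
    | single v x =>
      simp only [emb_single, mulA_single_single, mw_single_single, map_smul, smul_smul]

end QSh
end

noncomputable section
namespace QSh
variable {C : Type} [CommRing C] (lam : C)

lemma mulA_comm (f g : AA C) : mulA lam f g = mulA lam g f := by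
  induction f using Finsupp.induction_linear with
  | zero => simp
  | add f f' hf hf' => simp only [map_add, LinearMap.add_apply, hf, hf']
  | single p c =>
    induction g using Finsupp.induction_linear with
    | zero => simp
    | add g g' hg hg' => simp only [map_add, LinearMap.add_apply, hg, hg']
    | single q d =>
      simp only [mulA_single_single, qs_comm lam p.2 q.2, Nat.add_comm p.1 q.1, mul_comm c d]

lemma mulA_assoc (f g h : AA C) :
    mulA lam (mulA lam f g) h = mulA lam f (mulA lam g h) := by
  induction f using Finsupp.induction_linear with
  | zero => simp
  | add f f' hf hf' => simp only [map_add, LinearMap.add_apply, hf, hf']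
  | single p c =>
    induction g using Finsupp.induction_linear with
    | zero => simp
    | add g g' hg hg' => simp only [map_add, LinearMap.add_apply, hg, hg']
    | single q d =>
      induction h using Finsupp.induction_linear with
      | zero => simp
      | add h h' hh hh' => simp only [map_add, hh, hh']
      | single r e =>
        obtain ⟨d1, u⟩ := p
        obtain ⟨d2, v⟩ := q
        obtain ⟨d3, w⟩ := r
        rw [show (Finsupp.single (d1,u) c : AA C) = emb d1 (Finsupp.single u c) from
              (emb_single _ _ _).symm,
            show (Finsupp.single (d2,v) d : AA C) = emb d2 (Finsupp.single v d) from
              (emb_single _ _ _).symm,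
            show (Finsupp.single (d3,w) e : AA C) = emb d3 (Finsupp.single w e) from
              (emb_single _ _ _).symm,
            mulA_emb_emb, mulA_emb_emb, mulA_emb_emb, mulA_emb_emb,
            mw_assoc, Nat.add_assoc]

lemma mulA_one_left (f : AA C) : mulA lam (Finsupp.single ((0:ℕ), ([]:W)) 1) f = f := by
  induction f using Finsupp.induction_linear with
  | zero => simp
  | add f f' hf hf' => simp only [map_add, hf, hf']
  | single p c => simp

lemma mulA_one_right (f : AA C) : mulA lam f (Finsupp.single ((0:ℕ), ([]:W)) 1) = f := by
  rw [mulA_comm, mulA_one_left]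

@[reducible] noncomputable def ringAA : CommRing (AA C) :=
  { (inferInstance : AddCommGroup (AA C)) with
    mul := fun f g => mulA lam f g
    one := Finsupp.single ((0:ℕ), ([]:W)) 1
    mul_assoc := mulA_assoc lam
    one_mul := mulA_one_left lam
    mul_one := mulA_one_right lam
    left_distrib := fun f g h => by
      show mulA lam f (g + h) = mulA lam f g + mulA lam f h
      simp only [map_add]
    right_distrib := fun f g h => by
      show mulA lam (f + g) h = mulA lam f h + mulA lam g h
      simp only [map_add, LinearMap.add_apply]
    zero_mul := fun f => by
      show mulA lam 0 f = 0
      simp only [map_zero, LinearMap.zero_apply]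
    mul_zero := fun f => by
      show mulA lam f 0 = 0
      simp only [map_zero]
    mul_comm := mulA_comm lam }

end QSh
end

noncomputable section
namespace QSh
variable {C : Type} [CommRing C] (lam : C)

noncomputable def Qmap : AA C →ₗ[C] AA C :=
  Finsupp.lmapDomain C C (fun p : P => ((0:ℕ), p.1 :: p.2))

@[simp] lemma Qmap_single (p : P) (c : C) :
    Qmap (C := C) (Finsupp.single p c) = Finsupp.single ((0:ℕ), p.1 :: p.2) c := by
  simp [Qmap, Finsupp.lmapDomain_apply, Finsupp.mapDomain_single]

lemma Qmap_emb (d : ℕ) (X : W →₀ C) : Qmap (emb d X) = emb 0 (pre d X) := by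
  induction X using Finsupp.induction_linear with
  | zero => simp
  | add f g hf hg => simp only [map_add, hf, hg]
  | single u c => simp

lemma rb_mulA (a b : AA C) :
    mulA lam (Qmap a) (Qmap b) =
      Qmap (mulA lam a (Qmap b)) + Qmap (mulA lam b (Qmap a))
        + lam • Qmap (mulA lam a b) := by
  induction a using Finsupp.induction_linear with
  | zero => simp
  | add f f' hf hf' =>
    simp only [map_add, LinearMap.add_apply, hf, hf', smul_add]
    abel
  | single p c =>
    induction b using Finsupp.induction_linear with
    | zero => simp
    | add g g' hg hg' =>
      simp only [map_add, LinearMap.add_apply, hg, hg', smul_add]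
      abel
    | single q e =>
      obtain ⟨d1, u⟩ := p
      obtain ⟨d2, v⟩ := q
      simp only [Qmap_single, mulA_single_single]
      simp only [Nat.add_zero, Nat.zero_add, Qmap_emb, map_smul]
      rw [qs_cons_cons lam d1 d2 u v, qs_comm lam v (d1 :: u)]
      simp only [map_add, map_smul]
      module

end QSh
end

noncomputable section
namespace QSh
variable {C : Type} [CommRing C] (lam : C)

def SubS (C : Type) [CommRing C] : Submonoid C :=
  Submonoid.closure (Set.range fun k : ℕ => ((k + 1 : ℕ) : C))

abbrev MM (C : Type) [CommRing C] : Type := Localization (SubS C)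

lemma natCast_mem_SubS {m : ℕ} (h : 1 ≤ m) : ((m : ℕ) : C) ∈ SubS C := by
  have : ((m : ℕ) : C) = ((m - 1 + 1 : ℕ) : C) := by congr 1; omega
  rw [this]
  exact Submonoid.subset_closure ⟨m - 1, rfl⟩

lemma SubS_ne_zero [CharZero C] {c : C} (hc : c ∈ SubS C) : c ≠ 0 := by
  have : ∃ k : ℕ, c = ((k + 1 : ℕ) : C) := by
    induction hc using Submonoid.closure_induction with
    | mem x hx => obtain ⟨k, rfl⟩ := hx; exact ⟨k, rfl⟩
    | one => exact ⟨0, by norm_num⟩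
    | mul x y hx hy ihx ihy =>
      obtain ⟨k, rfl⟩ := ihx
      obtain ⟨j, rfl⟩ := ihy
      exact ⟨k * j + k + j, by push_cast; ring⟩
  obtain ⟨k, rfl⟩ := this
  exact Nat.cast_ne_zero.mpr (by omega)

lemma one_ne_zero_MM [CharZero C] : (1 : MM C) ≠ 0 := by
  intro h
  have h1 : algebraMap C (MM C) 1 = 0 := by rw [map_one, h]
  obtain ⟨m, hm⟩ := (IsLocalization.map_eq_zero_iff (SubS C) (MM C) 1).mp h1
  rw [mul_one] at hm
  exact SubS_ne_zero m.2 hm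

/-- inverse of a positive natural number in `MM C` -/
def invNat (m : ℕ) : MM C :=
  if h : 1 ≤ m then IsLocalization.mk' (MM C) (1 : C) ⟨(m : C), natCast_mem_SubS h⟩ else 0

lemma cast_smul_invNat {m : ℕ} (h : 1 ≤ m) : (m : C) • invNat (C := C) m = 1 := by
  rw [invNat, dif_pos h, Algebra.smul_def]
  exact IsLocalization.mk'_spec' (MM C) 1 ⟨(m : C), natCast_mem_SubS h⟩ |>.trans (map_one _)

@[simp] lemma invNat_one : invNat (C := C) 1 = 1 := by
  have := cast_smul_invNat (C := C) (m := 1) le_rfl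
  simpa using this

variable (n : ℕ)

/-- the functional values: `τ m s = [s = n+1] (-λ)^(m-1)/m` -/
def tau (m s : ℕ) : MM C :=
  if s = n + 1 then ((-lam) ^ (m - 1)) • invNat m else 0

lemma tau_zero (s : ℕ) : tau lam n 0 s = 0 := by
  simp [tau, invNat]

noncomputable def Sfun (k s : ℕ) : (W →₀ C) →ₗ[C] MM C :=
  Finsupp.lift _ C W fun v => tau lam n (v.length + k) (v.sum + s)

lemma Sfun_single (k s : ℕ) (v : W) (c : C) :
    Sfun lam n k s (Finsupp.single v c) = c • tau lam n (v.length + k) (v.sum + s) := by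
  simp [Sfun]

lemma Sfun_pre (k s a : ℕ) (X : W →₀ C) :
    Sfun lam n k s (pre a X) = Sfun lam n (k + 1) (s + a) X := by
  induction X using Finsupp.induction_linear with
  | zero => simp
  | add f g hf hg => simp only [map_add, hf, hg]
  | single u c =>
    rw [pre_single, Sfun_single, Sfun_single]
    congr 2
    · simp; omega
    · simp; omega

end QSh
end

noncomputable section
namespace QSh
variable {C : Type} [CommRing C] (lam : C) (n : ℕ)

lemma Sfun_qs_single (i : ℕ) : ∀ (u : W) (k s : ℕ),
    Sfun lam n k s (qs lam u [i]) =
      (u.length + 1) • tau lam n (u.length + 1 + k) (u.sum + i + s)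
        + u.length • (lam • tau lam n (u.length + k) (u.sum + i + s)) := by
  intro u
  induction u with
  | nil =>
    intro k s
    rw [qs_nil_left, Sfun_single, one_smul]
    simp only [List.length_cons, List.length_nil, List.sum_cons, List.sum_nil, zero_smul,
      add_zero, zero_add]
    simp
  | cons a u ih =>
    intro k s
    rw [qs_cons_cons lam a i u [], qs_nil_right, qs_nil_right]
    simp only [map_add, map_smul]
    rw [Sfun_pre, ih (k+1) (s+a), pre_single, pre_single, Sfun_single, Sfun_single,
      one_smul, one_smul]
    have e1 : u.length + 1 + (k + 1) = (a :: u).length + 1 + k := by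
      simp only [List.length_cons]; omega
    have e2 : u.sum + i + (s + a) = (a :: u).sum + i + s := by
      simp only [List.sum_cons]; omega
    have e3 : (i :: a :: u).length + k = (a :: u).length + 1 + k := by
      simp only [List.length_cons]; (try omega)
    have e4 : (i :: a :: u).sum + s = (a :: u).sum + i + s := by
      simp only [List.sum_cons]; omega
    have e5 : ((a + i) :: u).length + k = (a :: u).length + k := by
      simp only [List.length_cons]
    have e6 : ((a + i) :: u).sum + s = (a :: u).sum + i + s := by
      simp only [List.sum_cons]; omega
    have e7 : u.length + (k + 1) = (a :: u).length + k := by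
      simp only [List.length_cons]; omega
    rw [e1, e2, e3, e4, e5, e6, e7]
    have e8 : (a :: u).length = u.length + 1 := by simp
    rw [e8]
    rw [← Nat.cast_smul_eq_nsmul C, ← Nat.cast_smul_eq_nsmul C, ← Nat.cast_smul_eq_nsmul C,
      ← Nat.cast_smul_eq_nsmul C]
    push_cast
    module

lemma Sfun_qs_vanish (i : ℕ) (hi1 : 1 ≤ i) (hi2 : i ≤ n) (u : W) :
    Sfun lam n 0 0 (qs lam u [i]) = 0 := by
  rw [Sfun_qs_single]
  by_cases hs : u.sum + i + 0 = n + 1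
  · obtain ⟨j, hj⟩ : ∃ j, u.length = j + 1 := by
      refine ⟨u.length - 1, ?_⟩
      rcases Nat.eq_zero_or_pos u.length with h0 | h1
      · exfalso
        have : u = [] := List.length_eq_zero_iff.mp h0
        subst this
        simp only [List.sum_nil, Nat.zero_add, Nat.add_zero] at hs
        omega
      · omega
    rw [hs, hj]
    have t1 : tau lam n (j + 1 + 1 + 0) (n + 1)
        = ((-lam) ^ (j+1)) • invNat (C := C) (j + 1 + 1) := by
      rw [tau, if_pos rfl, show j + 1 + 1 + 0 = j + 1 + 1 by omega,
        show j + 1 + 1 - 1 = j + 1 by omega]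
    have t2 : tau lam n (j + 1 + 0) (n + 1) = ((-lam) ^ j) • invNat (C := C) (j + 1) := by
      rw [tau, if_pos rfl, show j + 1 + 0 = j + 1 by omega, show j + 1 - 1 = j by omega]
    rw [t1, t2]
    have k1 : ((j+1+1) : ℕ) • (((-lam)^(j+1)) • invNat (C := C) (j+1+1))
        = ((-lam)^(j+1)) • (1 : MM C) := by
      rw [← Nat.cast_smul_eq_nsmul C, smul_smul,
        show ((((j+1+1 : ℕ)) : C) * (-lam)^(j+1)) = ((-lam)^(j+1)) * (((j+1+1 : ℕ)) : C) by ring,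
        ← smul_smul, cast_smul_invNat (by omega)]
    have k2 : ((j+1) : ℕ) • (lam • (((-lam)^j) • invNat (C := C) (j+1)))
        = (lam * (-lam)^j) • (1 : MM C) := by
      rw [← Nat.cast_smul_eq_nsmul C, smul_smul, smul_smul,
        show ((((j+1 : ℕ)) : C) * lam * (-lam)^j) = (lam * (-lam)^j) * (((j+1 : ℕ)) : C) by ring,
        ← smul_smul, cast_smul_invNat (by omega)]
    rw [k1, k2, ← add_smul, show (-lam)^(j+1) + lam * (-lam)^j = 0 by rw [pow_succ]; ring,
      zero_smul]
  · rw [show tau lam n (u.length + 1 + 0) (u.sum + i + 0) = 0 from by rw [tau, if_neg hs],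
      show tau lam n (u.length + 0) (u.sum + i + 0) = 0 from by rw [tau, if_neg hs]]
    simp

noncomputable def Tfun : AA C →ₗ[C] MM C :=
  Finsupp.lift _ C P fun p =>
    if p.1 = 0 then tau lam n p.2.length p.2.sum else 0

lemma Tfun_single (p : P) (c : C) :
    Tfun lam n (Finsupp.single p c)
      = c • (if p.1 = 0 then tau lam n p.2.length p.2.sum else 0) := by
  simp [Tfun]

lemma Tfun_emb (d : ℕ) (X : W →₀ C) :
    Tfun lam n (emb d X) = if d = 0 then Sfun lam n 0 0 X else 0 := by
  induction X using Finsupp.induction_linear with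
  | zero =>
    simp only [map_zero]
    by_cases hd : d = 0 <;> simp [hd]
  | add f g hf hg =>
    simp only [map_add, hf, hg]
    by_cases hd : d = 0 <;> simp [hd]
  | single u c =>
    rw [emb_single, Tfun_single, Sfun_single]
    by_cases hd : d = 0
    · rw [if_pos hd, if_pos hd]
      simp
    · rw [if_neg hd, if_neg hd, smul_zero]

lemma Tfun_vanish (i : ℕ) (hi1 : 1 ≤ i) (hi2 : i ≤ n) (z : AA C) :
    Tfun lam n (mulA lam z (Finsupp.single ((0:ℕ), [i]) 1)) = 0 := by
  induction z using Finsupp.induction_linear with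
  | zero => simp
  | add f g hf hg => simp only [map_add, LinearMap.add_apply, hf, hg, add_zero]
  | single p c =>
    obtain ⟨d, u⟩ := p
    rw [mulA_single_single, map_smul, Tfun_emb]
    by_cases hd : d = 0
    · subst hd
      rw [if_pos (show (0 + 0 : ℕ) = 0 from rfl), Sfun_qs_vanish lam n i hi1 hi2 u, smul_zero]
    · rw [if_neg (show ¬(d + 0 = 0) by omega), smul_zero]

lemma Tfun_target : Tfun lam n (Finsupp.single ((0:ℕ), [n+1]) 1) = 1 := by
  rw [Tfun_single]
  simp only [if_pos rfl, one_smul]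
  have : tau lam n ([n+1] : W).length ([n+1] : W).sum = tau lam n 1 (n+1) := by
    congr 1 <;> simp
  rw [this, tau, if_pos rfl]
  simp

end QSh
end

/-- Theorem 3.3 for `X = {x}`: let `C` be a commutative ring of characteristic
zero and `λ ∈ C`.  Let `(A, P)` be the free Baxter `C`-algebra of weight `λ`
on one generator `x` (characterized by its universal property).  Then the
chain of ideals `Σ_n` generated by `{1 ⊗ x^i = P(x^i) : 1 ≤ i ≤ n}` is
strictly increasing — `P(x^{n+1}) ∉ Σ_n` for all `n ≥ 1` — and consequently
`A` is not a noetherian ring. -/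
theorem stmt15 (C : Type) [CommRing C] [CharZero C] (lam : C)
    (A : Type) [CommRing A] [Algebra C A] (P : A →ₗ[C] A)
    (hP : ∀ a b : A, P a * P b = P (a * P b) + P (b * P a) + lam • P (a * b))
    (x : A)
    (hfree : ∀ (R : Type) [CommRing R] [Algebra C R] (Q : R →ₗ[C] R),
      (∀ a b : R, Q a * Q b = Q (a * Q b) + Q (b * Q a) + lam • Q (a * b)) →
      ∀ r : R, ∃! φ : A →ₐ[C] R, φ x = r ∧ ∀ a : A, φ (P a) = Q (φ a)) :
    (∀ n : ℕ, 1 ≤ n →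
      P (x ^ (n + 1)) ∉ Ideal.span ((fun i : ℕ => P (x ^ i)) '' {i : ℕ | 1 ≤ i ∧ i ≤ n}))
      ∧ ¬ IsNoetherianRing A := by
  classical
  letI : CommRing (QSh.AA C) := QSh.ringAA lam
  letI : Algebra C (QSh.AA C) :=
    Algebra.ofModule
      (fun r f g => by
        show QSh.mulA lam (r • f) g = r • QSh.mulA lam f g
        rw [map_smul, LinearMap.smul_apply])
      (fun r f g => by
        show QSh.mulA lam f (r • g) = r • QSh.mulA lam f g
        rw [map_smul])
  set r : QSh.AA C := Finsupp.single ((1:ℕ), ([]:QSh.W)) 1 with hr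
  obtain ⟨φ, ⟨hφx, hφP⟩, -⟩ :=
    hfree (QSh.AA C) (QSh.Qmap) (fun a b => QSh.rb_mulA lam a b) r
  have hpow : ∀ k : ℕ, r ^ k = Finsupp.single ((k:ℕ), ([]:QSh.W)) (1:C) := by
    intro k
    induction k with
    | zero => rfl
    | succ k ih =>
      rw [pow_succ, ih, hr]
      show QSh.mulA lam _ _ = _
      rw [QSh.mulA_single_single]
      simp
  -- main strict-increase statement
  have main : ∀ n : ℕ, 1 ≤ n →
      P (x ^ (n + 1)) ∉ Ideal.span ((fun i : ℕ => P (x ^ i)) '' {i : ℕ | 1 ≤ i ∧ i ≤ n}) := by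
    intro n hn hmem
    have h2 := Ideal.mem_map_of_mem (φ : A →+* QSh.AA C) hmem
    rw [Ideal.map_span] at h2
    have himg : (⇑(φ : A →+* QSh.AA C) '' ((fun i : ℕ => P (x ^ i)) '' {i : ℕ | 1 ≤ i ∧ i ≤ n}))
        = ((fun i : ℕ => (Finsupp.single ((0:ℕ), [i]) (1:C) : QSh.AA C)) ''
            {i : ℕ | 1 ≤ i ∧ i ≤ n}) := by
      rw [Set.image_image]
      apply Set.image_congr
      intro i _
      show (φ : A →+* QSh.AA C) (P (x ^ i)) = _
      show φ (P (x ^ i)) = _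
      rw [hφP, map_pow, hφx, hpow i, QSh.Qmap_single]
    rw [himg] at h2
    have htgt : (φ : A →+* QSh.AA C) (P (x ^ (n + 1))) = Finsupp.single ((0:ℕ), [n+1]) (1:C) := by
      show φ (P (x ^ (n + 1))) = _
      rw [hφP, map_pow, hφx, hpow (n+1), QSh.Qmap_single]
    rw [htgt] at h2
    -- every element of the span is killed by Tfun after multiplication
    have key : ∀ y ∈ Ideal.span ((fun i : ℕ => (Finsupp.single ((0:ℕ), [i]) (1:C) : QSh.AA C)) ''
          {i : ℕ | 1 ≤ i ∧ i ≤ n}),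
        ∀ z : QSh.AA C, QSh.Tfun lam n (QSh.mulA lam z y) = 0 := by
      intro y hy
      induction hy using Submodule.span_induction with
      | mem y hyS =>
        obtain ⟨i, ⟨hi1, hi2⟩, rfl⟩ := hyS
        intro z
        exact QSh.Tfun_vanish lam n i hi1 hi2 z
      | zero =>
        intro z
        simp only [map_zero]
      | add a b ha hb iha ihb =>
        intro z
        simp only [map_add, iha z, ihb z, add_zero]
      | smul a y hy ih =>
        intro z
        show QSh.Tfun lam n (QSh.mulA lam z (QSh.mulA lam a y)) = 0
        rw [← QSh.mulA_assoc]
        exact ih (QSh.mulA lam z a)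
    have h3 := key _ h2 (1 : QSh.AA C)
    have h1eq : QSh.mulA lam (1 : QSh.AA C) (Finsupp.single ((0:ℕ), [n+1]) (1:C))
        = Finsupp.single ((0:ℕ), [n+1]) (1:C) := QSh.mulA_one_left lam _
    rw [h1eq, QSh.Tfun_target lam n] at h3
    exact QSh.one_ne_zero_MM (C := C) h3
  refine ⟨main, ?_⟩
  intro hN
  haveI := isNoetherianRing_iff.mp hN
  have hmono : Monotone (fun n : ℕ =>
      Ideal.span ((fun i : ℕ => P (x ^ i)) '' {i : ℕ | 1 ≤ i ∧ i ≤ n+1})) := by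
    intro a b hab
    apply Ideal.span_mono
    apply Set.image_mono
    intro i hi
    exact ⟨hi.1, le_trans hi.2 (by omega)⟩
  obtain ⟨N, hNs⟩ := monotone_stabilizes_iff_noetherian.mpr this
    ⟨fun n : ℕ => Ideal.span ((fun i : ℕ => P (x ^ i)) '' {i : ℕ | 1 ≤ i ∧ i ≤ n+1}), hmono⟩
  have hsub := hNs (N + 1) (by omega)
  simp only [OrderHom.coe_mk] at hsub
  have hin : P (x ^ (N + 1 + 1)) ∈
      Ideal.span ((fun i : ℕ => P (x ^ i)) '' {i : ℕ | 1 ≤ i ∧ i ≤ (N+1)+1}) := by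
    apply Ideal.subset_span
    exact ⟨N + 2, ⟨by omega, by omega⟩, rfl⟩
  rw [← hsub] at hin
  exact main (N + 1) (by omega) hin
end

section
/- Let C be a commutative ring, A a C-algebra, and M a C-submodule of A. In the shuffle Baxter algebra ш_C(A) = ⊕_{k≥0} A^{⊗(k+1)} of weight λ, let I be the additive subgroup generated by all pure tensors x_0 ⊗ x_1 ⊗ ⋯ ⊗ x_k (k ≥ 1) with x_{i_0} ∈ M for some 1 ≤ i_0 ≤ k. If λ = 0 or M is an ideal of A, then I is a Baxter ideal of ш_C(A) (an ideal closed under the operator P_A(x) = 1_A ⊗ x), and I equals the smallest Baxter ideal containing P_A(M). -/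
/-- The pure tensor `x₀ ⊗ x₁ ⊗ ⋯ ⊗ x_k` of the shuffle Baxter algebra
`ш_C(A)`, written in terms of the structure map `j : A → ш_C(A)` and the
Baxter operator `P`:  `x₀ ⊗ x₁ ⊗ ⋯ ⊗ x_k = j(x₀) · P(j(x₁) · P(⋯ P(j(x_k))))`. -/
def tensorWord {A R : Type} [One R] [Mul R] (j : A → R) (P : R → R) : List A → R
  | [] => 1
  | [x] => j x
  | x :: y :: xs => j x * P (tensorWord j P (y :: xs))

section Aux

variable {C A R : Type} [CommRing C] [CommRing A] [CommRing R]
  [Algebra C A] [Algebra C R]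

/-- The generating set of the ideal `I` (M-element in the tail). -/
abbrev SsetD (P : R →ₗ[C] R) (j : A →ₐ[C] R) (M : Submodule C A) : Set R :=
  {r : R | ∃ (x₀ : A) (L : List A), L ≠ [] ∧ (∃ m ∈ L, m ∈ M) ∧
    r = tensorWord (⇑j) (⇑P) (x₀ :: L)}

/-- A larger generating set (M-element anywhere in a nonempty word). -/
abbrev KsetD (P : R →ₗ[C] R) (j : A →ₐ[C] R) (M : Submodule C A) : Set R :=
  {r : R | ∃ L : List A, L ≠ [] ∧ (∃ m ∈ L, m ∈ M) ∧ r = tensorWord (⇑j) (⇑P) L}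

theorem tw_cons (P : R →ₗ[C] R) (j : A →ₐ[C] R) (x : A) {L : List A} (hL : L ≠ []) :
    tensorWord (⇑j) (⇑P) (x :: L) = j x * P (tensorWord (⇑j) (⇑P) L) := by
  cases L with
  | nil => exact absurd rfl hL
  | cons y ys => rfl

theorem tw_singleton (P : R →ₗ[C] R) (j : A →ₐ[C] R) (x : A) :
    tensorWord (⇑j) (⇑P) [x] = j x := rfl

set_option maxHeartbeats 1000000 in
/-- Product of two pure tensors: head entries multiply, and the rest is `1` or
in the image of `P`. -/
theorem tw_mul (lam : C) (P : R →ₗ[C] R) (j : A →ₐ[C] R)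
    (hP : ∀ a b : R, P a * P b = P (a * P b) + P (b * P a) + lam • P (a * b))
    (x y : A) (u v : List A) :
    ∃ t : R, tensorWord (⇑j) (⇑P) (x :: u) * tensorWord (⇑j) (⇑P) (y :: v)
      = j (x * y) * t ∧ (t = 1 ∨ ∃ s, t = P s) := by
  rcases u with _ | ⟨x₁, u'⟩
  · rcases v with _ | ⟨y₁, v'⟩
    · exact ⟨1, by rw [tw_singleton, tw_singleton, mul_one, map_mul], Or.inl rfl⟩
    · refine ⟨P (tensorWord (⇑j) (⇑P) (y₁ :: v')), ?_, Or.inr ⟨_, rfl⟩⟩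
      rw [tw_singleton, tw_cons P j y (List.cons_ne_nil _ _), ← mul_assoc, ← map_mul]
  · rcases v with _ | ⟨y₁, v'⟩
    · refine ⟨P (tensorWord (⇑j) (⇑P) (x₁ :: u')), ?_, Or.inr ⟨_, rfl⟩⟩
      rw [tw_singleton, tw_cons P j x (List.cons_ne_nil _ _), map_mul, mul_right_comm]
    · refine ⟨P (tensorWord (⇑j) (⇑P) (x₁ :: u') * P (tensorWord (⇑j) (⇑P) (y₁ :: v'))
        + tensorWord (⇑j) (⇑P) (y₁ :: v') * P (tensorWord (⇑j) (⇑P) (x₁ :: u'))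
        + lam • (tensorWord (⇑j) (⇑P) (x₁ :: u') * tensorWord (⇑j) (⇑P) (y₁ :: v'))),
        ?_, Or.inr ⟨_, rfl⟩⟩
      rw [tw_cons P j x (List.cons_ne_nil _ _), tw_cons P j y (List.cons_ne_nil _ _),
        mul_mul_mul_comm, hP, map_mul j x y, map_add, map_add, map_smul]

/-- Prepending an element to a word in the span of `KsetD` lands in the span of
`SsetD`. -/
theorem prepend_mem (P : R →ₗ[C] R) (j : A →ₐ[C] R) (M : Submodule C A) (a : A) {r : R}
    (hr : r ∈ Submodule.span C (KsetD P j M)) :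
    j a * P r ∈ Submodule.span C (SsetD P j M) := by
  refine Submodule.span_induction
    (p := fun x _ => j a * P x ∈ Submodule.span C (SsetD P j M)) ?_ ?_ ?_ ?_ hr
  · rintro x ⟨L, hL, hm, rfl⟩
    exact Submodule.subset_span ⟨a, L, hL, hm, (tw_cons P j a hL).symm⟩
  · simp only [map_zero, mul_zero]; exact zero_mem _
  · intro x y _ _ hx hy; simp only [map_add, mul_add]; exact add_mem hx hy
  · intro c x _ hx; simp only [map_smul, mul_smul_comm]; exact Submodule.smul_mem _ c hx

theorem S_le_K (P : R →ₗ[C] R) (j : A →ₐ[C] R) (M : Submodule C A) :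
    Submodule.span C (SsetD P j M) ≤ Submodule.span C (KsetD P j M) := by
  refine Submodule.span_mono ?_
  rintro r ⟨x₀, L, hL, ⟨m, hmL, hmM⟩, rfl⟩
  exact ⟨x₀ :: L, List.cons_ne_nil _ _, ⟨m, List.mem_cons_of_mem _ hmL, hmM⟩, rfl⟩

/-- `j m · P r` lies in `span KsetD` for `m ∈ M`. -/
theorem jmP_mem (P : R →ₗ[C] R) (j : A →ₐ[C] R)
    (hspan : Submodule.span C
      {r : R | ∃ (x₀ : A) (L : List A), r = tensorWord (⇑j) (⇑P) (x₀ :: L)} = ⊤)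
    (M : Submodule C A) {m : A} (hm : m ∈ M) (r : R) :
    j m * P r ∈ Submodule.span C (KsetD P j M) := by
  have hr : r ∈ Submodule.span C
      {r : R | ∃ (x₀ : A) (L : List A), r = tensorWord (⇑j) (⇑P) (x₀ :: L)} := by
    rw [hspan]; trivial
  refine Submodule.span_induction
    (p := fun x _ => j m * P x ∈ Submodule.span C (KsetD P j M)) ?_ ?_ ?_ ?_ hr
  · rintro x ⟨x₀, L, rfl⟩
    refine Submodule.subset_span ⟨m :: x₀ :: L, List.cons_ne_nil _ _,
      ⟨m, List.mem_cons_self, hm⟩, (tw_cons P j m (List.cons_ne_nil _ _)).symm⟩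
  · simp only [map_zero, mul_zero]; exact zero_mem _
  · intro x y _ _ hx hy; simp only [map_add, mul_add]; exact add_mem hx hy
  · intro c x _ hx; simp only [map_smul, mul_smul_comm]; exact Submodule.smul_mem _ c hx

theorem jm_mem (P : R →ₗ[C] R) (j : A →ₐ[C] R) (M : Submodule C A) {m : A} (hm : m ∈ M) :
    j m ∈ Submodule.span C (KsetD P j M) :=
  Submodule.subset_span ⟨[m], List.cons_ne_nil _ _, ⟨m, List.mem_cons_self, hm⟩, rfl⟩

/-- Ideal case: `j m · r ∈ span KsetD` for any `r`. -/
theorem jm_mul_mem (lam : C) (P : R →ₗ[C] R) (j : A →ₐ[C] R)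
    (hP : ∀ a b : R, P a * P b = P (a * P b) + P (b * P a) + lam • P (a * b))
    (hspan : Submodule.span C
      {r : R | ∃ (x₀ : A) (L : List A), r = tensorWord (⇑j) (⇑P) (x₀ :: L)} = ⊤)
    (M : Submodule C A) (hid : ∀ a : A, ∀ m ∈ M, a * m ∈ M)
    {m : A} (hm : m ∈ M) (r : R) :
    j m * r ∈ Submodule.span C (KsetD P j M) := by
  have hr : r ∈ Submodule.span C
      {r : R | ∃ (x₀ : A) (L : List A), r = tensorWord (⇑j) (⇑P) (x₀ :: L)} := by
    rw [hspan]; trivial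
  refine Submodule.span_induction
    (p := fun x _ => j m * x ∈ Submodule.span C (KsetD P j M)) ?_ ?_ ?_ ?_ hr
  · rintro x ⟨y, L, rfl⟩
    obtain ⟨t, ht, h1⟩ := tw_mul lam P j hP m y [] L
    have hmy : m * y ∈ M := by rw [mul_comm]; exact hid y m hm
    have ht' : j m * tensorWord (⇑j) (⇑P) (y :: L) = j (m * y) * t := ht
    rw [ht']
    rcases h1 with rfl | ⟨s, rfl⟩
    · rw [mul_one]; exact jm_mem P j M hmy
    · exact jmP_mem P j hspan M hmy s
  · simp only [mul_zero]; exact zero_mem _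
  · intro x y _ _ hx hy; simp only [mul_add]; exact add_mem hx hy
  · intro c x _ hx; simp only [mul_smul_comm]; exact Submodule.smul_mem _ c hx

/-- Ideal case: a word with head in `M`, times anything, is in `span KsetD`. -/
theorem headM_mul_mem (lam : C) (P : R →ₗ[C] R) (j : A →ₐ[C] R)
    (hP : ∀ a b : R, P a * P b = P (a * P b) + P (b * P a) + lam • P (a * b))
    (hspan : Submodule.span C
      {r : R | ∃ (x₀ : A) (L : List A), r = tensorWord (⇑j) (⇑P) (x₀ :: L)} = ⊤)
    (M : Submodule C A) (hid : ∀ a : A, ∀ m ∈ M, a * m ∈ M)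
    {m : A} (hm : m ∈ M) (L : List A) (r : R) :
    tensorWord (⇑j) (⇑P) (m :: L) * r ∈ Submodule.span C (KsetD P j M) := by
  rcases L with _ | ⟨z, L'⟩
  · exact jm_mul_mem lam P j hP hspan M hid hm r
  · rw [tw_cons P j m (List.cons_ne_nil _ _), mul_assoc]
    exact jm_mul_mem lam P j hP hspan M hid hm _

/-- Any-weight case: word with head in `M` times word with head `1`. -/
theorem headM_mul_head1_mem (lam : C) (P : R →ₗ[C] R) (j : A →ₐ[C] R)
    (hP : ∀ a b : R, P a * P b = P (a * P b) + P (b * P a) + lam • P (a * b))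
    (hspan : Submodule.span C
      {r : R | ∃ (x₀ : A) (L : List A), r = tensorWord (⇑j) (⇑P) (x₀ :: L)} = ⊤)
    (M : Submodule C A) {m : A} (hm : m ∈ M) (u v : List A) :
    tensorWord (⇑j) (⇑P) (m :: u) * tensorWord (⇑j) (⇑P) ((1 : A) :: v)
      ∈ Submodule.span C (KsetD P j M) := by
  obtain ⟨t, ht, h1⟩ := tw_mul lam P j hP m 1 u v
  rw [ht, mul_one]
  rcases h1 with rfl | ⟨s, rfl⟩
  · rw [mul_one]; exact jm_mem P j M hm
  · exact jmP_mem P j hspan M hm s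

set_option maxHeartbeats 1000000 in
/-- Main lemma: the product of two pure tensors, the first having an `M`-entry
in its tail, lies in `span KsetD`. -/
theorem main_mul (lam : C) (P : R →ₗ[C] R) (j : A →ₐ[C] R)
    (hP : ∀ a b : R, P a * P b = P (a * P b) + P (b * P a) + lam • P (a * b))
    (hspan : Submodule.span C
      {r : R | ∃ (x₀ : A) (L : List A), r = tensorWord (⇑j) (⇑P) (x₀ :: L)} = ⊤)
    (M : Submodule C A) (hM : lam = 0 ∨ ∀ a : A, ∀ m ∈ M, a * m ∈ M) :
    ∀ n : ℕ, ∀ u v : List A, ∀ x y : A, u.length + v.length ≤ n →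
      (∃ m ∈ u, m ∈ M) →
      tensorWord (⇑j) (⇑P) (x :: u) * tensorWord (⇑j) (⇑P) (y :: v)
        ∈ Submodule.span C (KsetD P j M) := by
  intro n
  induction n with
  | zero =>
    rintro u v x y hn ⟨m, hmu, hm⟩
    rcases u with _ | ⟨a, u⟩
    · simp at hmu
    · simp at hn
  | succ n ih =>
    rintro u v x y hn ⟨m, hmu, hm⟩
    rcases u with _ | ⟨x₁, u'⟩
    · simp at hmu
    rcases v with _ | ⟨y₁, v'⟩
    · -- v = []
      have hkey : tensorWord (⇑j) (⇑P) (x :: x₁ :: u') * tensorWord (⇑j) (⇑P) [y]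
          = tensorWord (⇑j) (⇑P) ((x * y) :: x₁ :: u') := by
        rw [tw_singleton, tw_cons P j x (List.cons_ne_nil _ _),
          tw_cons P j (x * y) (List.cons_ne_nil _ _), map_mul, mul_right_comm]
      rw [hkey]
      exact Submodule.subset_span ⟨(x * y) :: x₁ :: u', List.cons_ne_nil _ _,
        ⟨m, List.mem_cons_of_mem _ hmu, hm⟩, rfl⟩
    · -- both words have length ≥ 2
      have h1 : tensorWord (⇑j) (⇑P) ((1 : A) :: x₁ :: u')
          = P (tensorWord (⇑j) (⇑P) (x₁ :: u')) := by
        rw [tw_cons P j 1 (List.cons_ne_nil _ _), map_one, one_mul]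
      have h2 : tensorWord (⇑j) (⇑P) ((1 : A) :: y₁ :: v')
          = P (tensorWord (⇑j) (⇑P) (y₁ :: v')) := by
        rw [tw_cons P j 1 (List.cons_ne_nil _ _), map_one, one_mul]
      have hkey : tensorWord (⇑j) (⇑P) (x :: x₁ :: u') * tensorWord (⇑j) (⇑P) (y :: y₁ :: v')
          = j (x * y) * P (tensorWord (⇑j) (⇑P) (x₁ :: u') * P (tensorWord (⇑j) (⇑P) (y₁ :: v'))
              + tensorWord (⇑j) (⇑P) (y₁ :: v') * P (tensorWord (⇑j) (⇑P) (x₁ :: u'))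
              + lam • (tensorWord (⇑j) (⇑P) (x₁ :: u') * tensorWord (⇑j) (⇑P) (y₁ :: v'))) := by
        rw [tw_cons P j x (List.cons_ne_nil _ _), tw_cons P j y (List.cons_ne_nil _ _),
          mul_mul_mul_comm, hP, map_mul j x y, map_add, map_add, map_smul]
      rw [hkey]
      refine S_le_K P j M (prepend_mem P j M (x * y) ?_)
      refine add_mem (add_mem ?_ ?_) ?_
      · -- U * P V
        rw [← h2]
        rcases List.mem_cons.mp hmu with rfl | hmu'
        · exact headM_mul_head1_mem lam P j hP hspan M hm u' (y₁ :: v')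
        · exact ih u' (y₁ :: v') x₁ 1
            (by simp only [List.length_cons] at hn ⊢; omega) ⟨m, hmu', hm⟩
      · -- V * P U
        rw [← h1, mul_comm]
        exact ih (x₁ :: u') v' 1 y₁
          (by simp only [List.length_cons] at hn ⊢; omega) ⟨m, hmu, hm⟩
      · -- lam • (U * V)
        rcases hM with h0 | hid
        · rw [h0, zero_smul]; exact zero_mem _
        · refine Submodule.smul_mem _ lam ?_
          rcases List.mem_cons.mp hmu with rfl | hmu'
          · exact headM_mul_mem lam P j hP hspan M hid hm u' _
          · exact ih u' v' x₁ y₁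
              (by simp only [List.length_cons] at hn ⊢; omega) ⟨m, hmu', hm⟩

/-- Symmetric version of `main_mul`. -/
theorem main_mul' (lam : C) (P : R →ₗ[C] R) (j : A →ₐ[C] R)
    (hP : ∀ a b : R, P a * P b = P (a * P b) + P (b * P a) + lam • P (a * b))
    (hspan : Submodule.span C
      {r : R | ∃ (x₀ : A) (L : List A), r = tensorWord (⇑j) (⇑P) (x₀ :: L)} = ⊤)
    (M : Submodule C A) (hM : lam = 0 ∨ ∀ a : A, ∀ m ∈ M, a * m ∈ M)
    (u v : List A) (x y : A)
    (h : (∃ m ∈ u, m ∈ M) ∨ (∃ m ∈ v, m ∈ M)) :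
    tensorWord (⇑j) (⇑P) (x :: u) * tensorWord (⇑j) (⇑P) (y :: v)
      ∈ Submodule.span C (KsetD P j M) := by
  rcases h with h | h
  · exact main_mul lam P j hP hspan M hM (u.length + v.length) u v x y le_rfl h
  · rw [mul_comm]
    exact main_mul lam P j hP hspan M hM (v.length + u.length) v u y x le_rfl h

set_option maxHeartbeats 1000000 in
/-- Multiplication by a generator of `I` stays in `span SsetD`. -/
theorem mul_gen_mem (lam : C) (P : R →ₗ[C] R) (j : A →ₐ[C] R)
    (hP : ∀ a b : R, P a * P b = P (a * P b) + P (b * P a) + lam • P (a * b))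
    (hspan : Submodule.span C
      {r : R | ∃ (x₀ : A) (L : List A), r = tensorWord (⇑j) (⇑P) (x₀ :: L)} = ⊤)
    (M : Submodule C A) (hM : lam = 0 ∨ ∀ a : A, ∀ m ∈ M, a * m ∈ M)
    {s : R} (hs : s ∈ SsetD P j M) (a : R) :
    a * s ∈ Submodule.span C (SsetD P j M) := by
  obtain ⟨x₀, L, hL, hmL, rfl⟩ := hs
  have ha : a ∈ Submodule.span C
      {r : R | ∃ (x₀ : A) (L : List A), r = tensorWord (⇑j) (⇑P) (x₀ :: L)} := by
    rw [hspan]; trivial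
  refine Submodule.span_induction
    (p := fun t _ => t * tensorWord (⇑j) (⇑P) (x₀ :: L) ∈ Submodule.span C (SsetD P j M))
    ?_ ?_ ?_ ?_ ha
  · rintro t ⟨y, ys, rfl⟩
    rcases L with _ | ⟨l₁, L'⟩
    · exact absurd rfl hL
    rcases ys with _ | ⟨z, zs⟩
    · -- length-1 times generator
      have hkey : tensorWord (⇑j) (⇑P) [y] * tensorWord (⇑j) (⇑P) (x₀ :: l₁ :: L')
          = tensorWord (⇑j) (⇑P) ((y * x₀) :: l₁ :: L') := by
        rw [tw_singleton, tw_cons P j x₀ (List.cons_ne_nil _ _),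
          tw_cons P j (y * x₀) (List.cons_ne_nil _ _), ← mul_assoc, ← map_mul]
      rw [hkey]
      exact Submodule.subset_span ⟨y * x₀, l₁ :: L', List.cons_ne_nil _ _, hmL, rfl⟩
    · -- both words of length ≥ 2
      have h1 : tensorWord (⇑j) (⇑P) ((1 : A) :: z :: zs)
          = P (tensorWord (⇑j) (⇑P) (z :: zs)) := by
        rw [tw_cons P j 1 (List.cons_ne_nil _ _), map_one, one_mul]
      have h2 : tensorWord (⇑j) (⇑P) ((1 : A) :: l₁ :: L')
          = P (tensorWord (⇑j) (⇑P) (l₁ :: L')) := by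
        rw [tw_cons P j 1 (List.cons_ne_nil _ _), map_one, one_mul]
      have hkey : tensorWord (⇑j) (⇑P) (y :: z :: zs) * tensorWord (⇑j) (⇑P) (x₀ :: l₁ :: L')
          = j (y * x₀) * P (tensorWord (⇑j) (⇑P) (z :: zs) * P (tensorWord (⇑j) (⇑P) (l₁ :: L'))
              + tensorWord (⇑j) (⇑P) (l₁ :: L') * P (tensorWord (⇑j) (⇑P) (z :: zs))
              + lam • (tensorWord (⇑j) (⇑P) (z :: zs) * tensorWord (⇑j) (⇑P) (l₁ :: L'))) := by
        rw [tw_cons P j y (List.cons_ne_nil _ _), tw_cons P j x₀ (List.cons_ne_nil _ _),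
          mul_mul_mul_comm, hP, map_mul j y x₀, map_add, map_add, map_smul]
      rw [hkey]
      refine prepend_mem P j M (y * x₀) ?_
      obtain ⟨m, hmL', hmM⟩ := hmL
      refine add_mem (add_mem ?_ ?_) ?_
      · rw [← h2]
        exact main_mul' lam P j hP hspan M hM zs (l₁ :: L') z 1
          (Or.inr ⟨m, hmL', hmM⟩)
      · rw [← h1]
        rcases List.mem_cons.mp hmL' with rfl | hmem'
        · exact headM_mul_head1_mem lam P j hP hspan M hmM L' (z :: zs)
        · exact main_mul' lam P j hP hspan M hM L' (z :: zs) l₁ 1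
            (Or.inl ⟨m, hmem', hmM⟩)
      · rcases hM with h0 | hid
        · rw [h0, zero_smul]; exact zero_mem _
        · refine Submodule.smul_mem _ lam ?_
          rw [mul_comm]
          rcases List.mem_cons.mp hmL' with rfl | hmem'
          · exact headM_mul_mem lam P j hP hspan M hid hmM L' _
          · exact main_mul' lam P j hP hspan M (Or.inr hid) L' zs l₁ z
              (Or.inl ⟨m, hmem', hmM⟩)
  · simp only [zero_mul]; exact zero_mem _
  · intro b c _ _ hb hc; simp only [add_mul]; exact add_mem hb hc
  · intro c b _ hb; simp only [smul_mul_assoc]; exact Submodule.smul_mem _ c hb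

set_option maxHeartbeats 1000000 in
/-- For a Baxter ideal `J` containing `P(j(M))`, and `M` an ideal of `A`:
`P(j m · r) ∈ J` for all `m ∈ M` and `r`. -/
theorem Z_mem (lam : C) (P : R →ₗ[C] R) (j : A →ₐ[C] R)
    (hP : ∀ a b : R, P a * P b = P (a * P b) + P (b * P a) + lam • P (a * b))
    (hspan : Submodule.span C
      {r : R | ∃ (x₀ : A) (L : List A), r = tensorWord (⇑j) (⇑P) (x₀ :: L)} = ⊤)
    (M : Submodule C A) (hid : ∀ a : A, ∀ m ∈ M, a * m ∈ M)
    (J : Ideal R) (hJP : ∀ r ∈ J, P r ∈ J) (hJM : ∀ m ∈ M, P (j m) ∈ J) :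
    ∀ m ∈ M, ∀ r : R, P (j m * r) ∈ J := by
  have zpure : ∀ n : ℕ, ∀ L : List A, L.length ≤ n → ∀ m ∈ M, ∀ y : A,
      P (j m * tensorWord (⇑j) (⇑P) (y :: L)) ∈ J := by
    intro n
    induction n with
    | zero =>
      intro L hL m hm y
      rcases L with _ | ⟨z, L'⟩
      · rw [tw_singleton, ← map_mul]
        exact hJM _ (by rw [mul_comm]; exact hid y m hm)
      · simp at hL
    | succ n ihn =>
      intro L hL m hm y
      rcases L with _ | ⟨z, L'⟩
      · rw [tw_singleton, ← map_mul]
        exact hJM _ (by rw [mul_comm]; exact hid y m hm)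
      · have hmy : m * y ∈ M := by rw [mul_comm]; exact hid y m hm
        have hkey : j m * tensorWord (⇑j) (⇑P) (y :: z :: L')
            = j (m * y) * P (tensorWord (⇑j) (⇑P) (z :: L')) := by
          rw [tw_cons P j y (List.cons_ne_nil _ _), ← mul_assoc, ← map_mul]
        rw [hkey]
        have h2 : P (j (m * y) * P (tensorWord (⇑j) (⇑P) (z :: L')))
            = P (j (m * y)) * P (tensorWord (⇑j) (⇑P) (z :: L'))
              - P (tensorWord (⇑j) (⇑P) (z :: L') * P (j (m * y)))
              - lam • P (j (m * y) * tensorWord (⇑j) (⇑P) (z :: L')) := by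
          rw [hP]; abel
        rw [h2]
        refine sub_mem (sub_mem ?_ ?_) ?_
        · exact Ideal.mul_mem_right _ J (hJM _ hmy)
        · exact hJP _ (Ideal.mul_mem_left J _ (hJM _ hmy))
        · exact Submodule.smul_of_tower_mem J lam
            (ihn L' (by simp only [List.length_cons] at hL ⊢; omega) _ hmy z)
  intro m hm r
  have hr : r ∈ Submodule.span C
      {r : R | ∃ (x₀ : A) (L : List A), r = tensorWord (⇑j) (⇑P) (x₀ :: L)} := by
    rw [hspan]; trivial
  refine Submodule.span_induction (p := fun t _ => P (j m * t) ∈ J) ?_ ?_ ?_ ?_ hr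
  · rintro t ⟨y, L, rfl⟩
    exact zpure L.length L le_rfl m hm y
  · simp only [mul_zero, map_zero]; exact zero_mem _
  · intro a b _ _ ha hb; simp only [mul_add, map_add]; exact add_mem ha hb
  · intro c t _ ht; rw [mul_smul_comm, map_smul]
    exact Submodule.smul_of_tower_mem J c ht

set_option maxHeartbeats 1000000 in
/-- Minimality: `P` of any word with an `M`-entry lies in any Baxter ideal `J`
containing `P(j(M))`. -/
theorem min_mem (lam : C) (P : R →ₗ[C] R) (j : A →ₐ[C] R)
    (hP : ∀ a b : R, P a * P b = P (a * P b) + P (b * P a) + lam • P (a * b))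
    (hspan : Submodule.span C
      {r : R | ∃ (x₀ : A) (L : List A), r = tensorWord (⇑j) (⇑P) (x₀ :: L)} = ⊤)
    (M : Submodule C A) (hM : lam = 0 ∨ ∀ a : A, ∀ m ∈ M, a * m ∈ M)
    (J : Ideal R) (hJP : ∀ r ∈ J, P r ∈ J) (hJM : ∀ m ∈ M, P (j m) ∈ J) :
    ∀ L : List A, (∃ m ∈ L, m ∈ M) → P (tensorWord (⇑j) (⇑P) L) ∈ J := by
  intro L
  induction L with
  | nil => rintro ⟨m, hmem, _⟩; simp at hmem
  | cons x L ih =>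
    rintro ⟨m, hmem, hm⟩
    rcases L with _ | ⟨z, L'⟩
    · have hx : m = x := by simpa using hmem
      subst hx
      rw [tw_singleton]
      exact hJM m hm
    · rw [tw_cons P j x (List.cons_ne_nil _ _)]
      rcases List.mem_cons.mp hmem with rfl | hmem'
      · have h2 : P (j m * P (tensorWord (⇑j) (⇑P) (z :: L')))
            = P (j m) * P (tensorWord (⇑j) (⇑P) (z :: L'))
              - P (tensorWord (⇑j) (⇑P) (z :: L') * P (j m))
              - lam • P (j m * tensorWord (⇑j) (⇑P) (z :: L')) := by
          rw [hP]; abel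
        rw [h2]
        refine sub_mem (sub_mem ?_ ?_) ?_
        · exact Ideal.mul_mem_right _ J (hJM m hm)
        · exact hJP _ (Ideal.mul_mem_left J _ (hJM m hm))
        · rcases hM with h0 | hid
          · rw [h0, zero_smul]; exact zero_mem _
          · exact Submodule.smul_of_tower_mem J lam
              (Z_mem lam P j hP hspan M hid J hJP hJM m hm _)
      · exact hJP _ (Ideal.mul_mem_left J _ (ih ⟨m, hmem', hm⟩))

end Aux

/-- Lemma 4.5: let `ш_C(A)` be the shuffle Baxter algebra of weight `λ` on a
`C`-algebra `A` (a Baxter algebra `(R, P)` with structure map `j : A → R`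
whose pure tensors span `R`), and let `M` be a `C`-submodule of `A`.  Let `I`
be the additive subgroup generated by the pure tensors
`x₀ ⊗ x₁ ⊗ ⋯ ⊗ x_k` (`k ≥ 1`) having some factor `x_{i₀} ∈ M` with
`1 ≤ i₀ ≤ k`.  If `λ = 0` or `M` is an ideal of `A`, then `I` is a Baxter
ideal of `R`, and `I` is the smallest Baxter ideal containing `P(j(M))`. -/
theorem stmt16 (C A R : Type) [CommRing C] [CommRing A] [CommRing R]
    [Algebra C A] [Algebra C R] (lam : C)
    (P : R →ₗ[C] R)
    (hP : ∀ a b : R, P a * P b = P (a * P b) + P (b * P a) + lam • P (a * b))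
    (j : A →ₐ[C] R)
    (hspan : Submodule.span C
      {r : R | ∃ (x₀ : A) (L : List A), r = tensorWord (⇑j) (⇑P) (x₀ :: L)} = ⊤)
    (M : Submodule C A)
    (hM : lam = 0 ∨ ∀ (a : A), ∀ m ∈ M, a * m ∈ M) :
    let I : AddSubgroup R := AddSubgroup.closure
      {r : R | ∃ (x₀ : A) (L : List A), L ≠ [] ∧ (∃ m ∈ L, m ∈ M) ∧
        r = tensorWord (⇑j) (⇑P) (x₀ :: L)}
    (∀ r ∈ I, P r ∈ I) ∧
    (∀ (a : R), ∀ r ∈ I, a * r ∈ I) ∧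
    (∀ m ∈ M, P (j m) ∈ I) ∧
    (∀ J : Ideal R, (∀ r ∈ J, P r ∈ J) → (∀ m ∈ M, P (j m) ∈ J) →
      (I : Set R) ⊆ (J : Set R)) := by
  intro I
  -- `I` is the closure of `SsetD P j M`
  have hsub1 : ∀ r ∈ I, r ∈ Submodule.span C (SsetD P j M) := by
    intro r hr
    exact (AddSubgroup.closure_le (Submodule.span C (SsetD P j M)).toAddSubgroup).mpr
      (fun x hx => Submodule.subset_span hx) hr
  have hsmulI : ∀ (c : C) (r : R), r ∈ I → c • r ∈ I := by
    intro c r hr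
    refine AddSubgroup.closure_induction (p := fun t _ => c • t ∈ I) ?_ ?_ ?_ ?_ hr
    · rintro t ⟨x₀, L, hL, hm, rfl⟩
      refine AddSubgroup.subset_closure ⟨c • x₀, L, hL, hm, ?_⟩
      rw [tw_cons P j x₀ hL, tw_cons P j (c • x₀) hL, map_smul, smul_mul_assoc]
    · simp only [smul_zero]; exact zero_mem I
    · intro a b _ _ ha hb; simp only [smul_add]; exact add_mem ha hb
    · intro a _ ha; simp only [smul_neg]; exact neg_mem ha
  have hsub2 : ∀ r ∈ Submodule.span C (SsetD P j M), r ∈ I := by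
    intro r hr
    refine Submodule.span_induction (p := fun t _ => t ∈ I) ?_ ?_ ?_ ?_ hr
    · exact fun t ht => AddSubgroup.subset_closure ht
    · exact zero_mem I
    · exact fun a b _ _ ha hb => add_mem ha hb
    · exact fun c t _ ht => hsmulI c t ht
  refine ⟨?_, ?_, ?_, ?_⟩
  · -- Baxter operator preserves I
    intro r hr
    refine hsub2 _ ?_
    refine Submodule.span_induction
      (p := fun t _ => P t ∈ Submodule.span C (SsetD P j M)) ?_ ?_ ?_ ?_ (hsub1 r hr)
    · rintro t ⟨x₀, L, hL, ⟨m, hmL, hmM⟩, rfl⟩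
      refine Submodule.subset_span ⟨1, x₀ :: L, List.cons_ne_nil _ _,
        ⟨m, List.mem_cons_of_mem _ hmL, hmM⟩, ?_⟩
      rw [tw_cons P j 1 (List.cons_ne_nil _ _), map_one, one_mul]
    · simp only [map_zero]; exact zero_mem _
    · intro a b _ _ ha hb; simp only [map_add]; exact add_mem ha hb
    · intro c t _ ht; simp only [map_smul]; exact Submodule.smul_mem _ c ht
  · -- I is an ideal
    intro a r hr
    refine hsub2 _ ?_
    refine Submodule.span_induction
      (p := fun t _ => a * t ∈ Submodule.span C (SsetD P j M)) ?_ ?_ ?_ ?_ (hsub1 r hr)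
    · exact fun t ht => mul_gen_mem lam P j hP hspan M hM ht a
    · simp only [mul_zero]; exact zero_mem _
    · intro b c _ _ hb hc; simp only [mul_add]; exact add_mem hb hc
    · intro c t _ ht; simp only [mul_smul_comm]; exact Submodule.smul_mem _ c ht
  · -- P (j M) ⊆ I
    intro m hm
    refine AddSubgroup.subset_closure ⟨1, [m], List.cons_ne_nil _ _,
      ⟨m, List.mem_cons_self, hm⟩, ?_⟩
    rw [tw_cons P j 1 (List.cons_ne_nil _ _), map_one, one_mul, tw_singleton]
  · -- minimality
    intro J hJP hJM r hr
    have hle : AddSubgroup.closure (SsetD P j M) ≤ J.toAddSubgroup := by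
      rw [AddSubgroup.closure_le]
      rintro t ⟨x₀, L, hL, hm, rfl⟩
      show tensorWord (⇑j) (⇑P) (x₀ :: L) ∈ J
      rw [tw_cons P j x₀ hL]
      exact Ideal.mul_mem_left J _ (min_mem lam P j hP hspan M hM J hJP hJM L hm)
    exact hle hr
end

section
/- Let C be a commutative ring and A a C-algebra such that there exists a surjective C-linear map f : A → C. If M ⊊ N are C-submodules of A, then the images of A ⊗_C M and A ⊗_C N in A ⊗_C A (under the maps induced by the inclusions M, N ↪ A) are distinct: A⊗̄M ⊊ A⊗̄N. -/
open TensorProduct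

/-- Key step in the proof of Corollary 4.4(1): if there is a surjective
`C`-linear map `f : A → C` and `M ⊊ N` are `C`-submodules of `A`, then the
images `A⊗̄M ⊊ A⊗̄N` of `A ⊗ M` and `A ⊗ N` in `A ⊗ A` are distinct. -/
theorem stmt17 (C : Type) [CommRing C] (A : Type) [CommRing A] [Algebra C A]
    (f : A →ₗ[C] C) (hf : Function.Surjective f)
    (M N : Submodule C A) (hMN : M < N) :
    LinearMap.range (TensorProduct.map (LinearMap.id : A →ₗ[C] A) M.subtype) <
      LinearMap.range (TensorProduct.map (LinearMap.id : A →ₗ[C] A) N.subtype) := by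
  -- the C-linear retraction g : A ⊗ A → A, x ⊗ y ↦ f x • y
  set g : (A ⊗[C] A) →ₗ[C] A :=
    (TensorProduct.lid C A).toLinearMap ∘ₗ TensorProduct.map f LinearMap.id with hg
  have hle : LinearMap.range (TensorProduct.map (LinearMap.id : A →ₗ[C] A) M.subtype) ≤
      LinearMap.range (TensorProduct.map (LinearMap.id : A →ₗ[C] A) N.subtype) := by
    have hfac : TensorProduct.map (LinearMap.id : A →ₗ[C] A) M.subtype =
        (TensorProduct.map (LinearMap.id : A →ₗ[C] A) N.subtype) ∘ₗ
          TensorProduct.map LinearMap.id (Submodule.inclusion hMN.le) := by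
      rw [← TensorProduct.map_comp]
      congr 1
    rw [hfac]
    exact LinearMap.range_comp_le_range _ _
  refine lt_of_le_of_ne hle ?_
  intro heq
  obtain ⟨n, hnN, hnM⟩ := SetLike.exists_of_lt hMN
  obtain ⟨a, ha⟩ := hf 1
  have hmem : (a ⊗ₜ[C] n : A ⊗[C] A) ∈
      LinearMap.range (TensorProduct.map (LinearMap.id : A →ₗ[C] A) N.subtype) :=
    ⟨a ⊗ₜ ⟨n, hnN⟩, rfl⟩
  rw [← heq] at hmem
  obtain ⟨x, hx⟩ := hmem
  -- g maps the image of A ⊗ M into M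
  have hgM : ∀ y : A ⊗[C] M,
      g (TensorProduct.map (LinearMap.id : A →ₗ[C] A) M.subtype y) ∈ M := by
    intro y
    induction y using TensorProduct.induction_on with
    | zero => simp
    | tmul b m =>
        simp only [hg, TensorProduct.map_tmul, LinearMap.coe_comp, Function.comp_apply,
          LinearEquiv.coe_coe, TensorProduct.lid_tmul, LinearMap.id_coe, id_eq]
        exact M.smul_mem _ m.2
    | add y z hy hz =>
        rw [map_add, map_add]
        exact M.add_mem hy hz
  have hgx : g (TensorProduct.map (LinearMap.id : A →ₗ[C] A) M.subtype x) = n := by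
    rw [hx]
    simp [hg, ha]
  exact hnM (hgx ▸ hgM x)
end
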